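/- arXiv:1711.05931 — 2 statements merged into one kernel-verified Lean document; each statement's English description precedes it below -/
import Mathlib

section
/- Let k > 4. A triangulation of a convex k-gon is triangle-free (meaning no three of its diagonals form the three sides of a triangle) if and only if it contains exactly two short chords. -/
/-- `d` is a diagonal of the convex `k`-gon with vertices `0, …, k−1` (in cyclic order),
written as an ordered pair `d.1 < d.2` of nonadjacent vertices. -/
def IsDiag (k : ℕ) (d : ℕ × ℕ) : Prop :=
  d.1 < d.2 ∧ d.2 < k ∧ d.2 ≠ d.1 + 1 ∧ ¬(d.1 = 0 ∧ d.2 = k - 1)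

/-- Two diagonals cross (in the interior of the polygon). -/
def Cross (d e : ℕ × ℕ) : Prop :=
  (d.1 < e.1 ∧ e.1 < d.2 ∧ d.2 < e.2) ∨ (e.1 < d.1 ∧ d.1 < e.2 ∧ e.2 < d.2)

/-- `T` is a triangulation of the convex `k`-gon: `k − 3` pairwise noncrossing diagonals. -/
def IsTriangulation (k : ℕ) (T : Finset (ℕ × ℕ)) : Prop :=
  T.card = k - 3 ∧ (∀ d ∈ T, IsDiag k d) ∧ ∀ d ∈ T, ∀ e ∈ T, ¬ Cross d e

/-- `d` is a short chord, i.e. a diagonal of the form `q_{i−1} q_{i+1}` (indices mod `k`). -/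
def IsShort (k : ℕ) (d : ℕ × ℕ) : Prop :=
  d.2 = d.1 + 2 ∨ (d.1 = 0 ∧ d.2 = k - 2) ∨ (d.1 = 1 ∧ d.2 = k - 1)

instance (k : ℕ) (d : ℕ × ℕ) : Decidable (IsShort k d) := by unfold IsShort; infer_instance


/-- No three diagonals of `T` bound a triangle. -/
def TriangleFree (T : Finset (ℕ × ℕ)) : Prop :=
  ¬ ∃ a b c : ℕ, a < b ∧ b < c ∧ (a, b) ∈ T ∧ (b, c) ∈ T ∧ (a, c) ∈ T

/-!
Call the triangles of the triangulation its faces, and let `δ f ∈ {1, 2, 3}` be the number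
of sides of a face `f` that are diagonals (`δ f = 0` only happens for `k = 3`). A face is
determined by its longest side, which is a diagonal or the edge `q₀ q_{k-1}`, so there are
`k - 2` faces; every diagonal bounds exactly two faces, so `∑ δ = 2 (k - 3)`. Hence
`#{δ = 1} - #{δ = 3} = ∑ (2 - δ) = 2`. The faces with `δ = 3` are the triangles of diagonals,
and for `k > 4` the faces with `δ = 1` are exactly the ears cut off by the short chords.

The existence of the faces uses that a triangulation is a maximal noncrossing family, which
follows from the bound `k - 3` on pairwise noncrossing diagonals.
-/

open Finset

lemma cross_comm {d e : ℕ × ℕ} : Cross d e ↔ Cross e d := by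
  unfold Cross; tauto

def inside (S : Finset (ℕ × ℕ)) (a b : ℕ) : Finset (ℕ × ℕ) :=
  S.filter fun d => a ≤ d.1 ∧ d.2 ≤ b

lemma card_inside_le {S : Finset (ℕ × ℕ)} (hlong : ∀ d ∈ S, d.1 + 2 ≤ d.2) {a b : ℕ}
    (h : #((inside S a b).erase (a, b)) ≤ b - a - 2) : #(inside S a b) ≤ b - a - 1 := by
  by_cases hab : a + 2 ≤ b
  · have := pred_card_le_card_erase (s := inside S a b) (a := (a, b))
    omega
  · rw [show inside S a b = ∅ from filter_eq_empty_iff.2 fun d hd h => by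
      have := hlong d hd; omega]
    simp

theorem card_erase_inside_le {S : Finset (ℕ × ℕ)} (hlong : ∀ d ∈ S, d.1 + 2 ≤ d.2)
    (hS : ∀ d ∈ S, ∀ e ∈ S, ¬ Cross d e) (a b : ℕ) :
    #((inside S a b).erase (a, b)) ≤ b - a - 2 := by
  set R := (inside S a b).erase (a, b)
  obtain hR | hR := R.eq_empty_or_nonempty
  · simp [hR]
  obtain ⟨m, hmR, hmax⟩ := exists_max_image R (fun d => d.2 - d.1) hR
  have memR : ∀ {e}, e ∈ R ↔ e ≠ (a, b) ∧ e ∈ S ∧ a ≤ e.1 ∧ e.2 ≤ b := by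
    intro e; simp [R, inside]
  obtain ⟨hmab, hmS, ham, hmb⟩ := memR.1 hmR
  have hm2 := hlong m hmS
  -- cutting at an endpoint of a longest member separates all the others
  obtain ⟨c, hac, hcb, hsplit⟩ : ∃ c, a < c ∧ c < b ∧ ∀ e ∈ R, e.2 ≤ c ∨ c ≤ e.1 := by
    by_cases hma : a < m.1
    · refine ⟨m.1, hma, by omega, fun e he => ?_⟩
      have := hmax e he
      have := hS e (memR.1 he).2.1 m hmS
      unfold Cross at this; omega
    · have : m.2 ≠ b := fun h => hmab (Prod.ext (by omega) h)
      refine ⟨m.2, by omega, by omega, fun e he => ?_⟩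
      have := hmax e he
      have := hS m hmS e (memR.1 he).2.1
      unfold Cross at this; omega
  have hsub : R ⊆ inside S a c ∪ inside S c b := fun e he => by
    obtain ⟨-, heS, hae, heb⟩ := memR.1 he
    rcases hsplit e he with h | h <;> simp [inside, *]
  have hac' := card_inside_le hlong (card_erase_inside_le hlong hS a c)
  have hcb' := card_inside_le hlong (card_erase_inside_le hlong hS c b)
  have := (card_le_card hsub).trans (card_union_le _ _)
  omega
termination_by b - a

theorem card_le_of_pairwise_not_cross {k : ℕ} {S : Finset (ℕ × ℕ)}
    (hd : ∀ d ∈ S, IsDiag k d) (hS : ∀ d ∈ S, ∀ e ∈ S, ¬ Cross d e) : #S ≤ k - 3 := by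
  have hlong : ∀ d ∈ S, d.1 + 2 ≤ d.2 := fun d h => by
    have := hd d h; unfold IsDiag at this; omega
  have hall : inside S 0 (k - 1) = S :=
    filter_true_of_mem fun d h => by have := hd d h; unfold IsDiag at this; omega
  have hroot : (0, k - 1) ∉ S := fun h => by have := hd _ h; unfold IsDiag at this; omega
  have := card_erase_inside_le hlong hS 0 (k - 1)
  rw [hall, erase_eq_of_notMem hroot] at this
  omega

lemma two_mul_card_add_card_filter_eq_three {ι : Type*} (s : Finset ι) (δ : ι → ℕ)
    (h : ∀ i ∈ s, δ i ∈ Set.Icc 1 3) :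
    2 * #s + #(s.filter (δ · = 3)) = ∑ i ∈ s, δ i + #(s.filter (δ · = 1)) := by
  rw [card_filter, card_filter, card_eq_sum_ones, mul_sum, ← sum_add_distrib, ← sum_add_distrib]
  refine sum_congr rfl fun i hi => ?_
  have := Set.mem_Icc.1 (h i hi)
  split_ifs <;> omega

def IsSide (k : ℕ) (T : Finset (ℕ × ℕ)) (d : ℕ × ℕ) : Prop :=
  d ∈ T ∨ (d.2 = d.1 + 1 ∧ d.2 < k) ∨ d = (0, k - 1)

instance (k : ℕ) (T : Finset (ℕ × ℕ)) : DecidablePred (IsSide k T) := fun _ => by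
  unfold IsSide; infer_instance

def IsFace (k : ℕ) (T : Finset (ℕ × ℕ)) (x y z : ℕ) : Prop :=
  x < y ∧ y < z ∧ z < k ∧ IsSide k T (x, y) ∧ IsSide k T (y, z) ∧ IsSide k T (x, z)

instance (k : ℕ) (T : Finset (ℕ × ℕ)) (x y z : ℕ) : Decidable (IsFace k T x y z) := by
  unfold IsFace; infer_instance

def faces (k : ℕ) (T : Finset (ℕ × ℕ)) : Finset (ℕ × ℕ × ℕ) :=
  (range k ×ˢ range k ×ˢ range k).filter fun f => IsFace k T f.1 f.2.1 f.2.2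

lemma mem_faces {k : ℕ} {T : Finset (ℕ × ℕ)} {x y z : ℕ} :
    (x, y, z) ∈ faces k T ↔ IsFace k T x y z := by
  simp only [faces, mem_filter, mem_product, mem_range, and_iff_right_iff_imp]
  intro h; unfold IsFace at h; omega

def sides (f : ℕ × ℕ × ℕ) : Finset (ℕ × ℕ) :=
  {(f.1, f.2.1), (f.2.1, f.2.2), (f.1, f.2.2)}

lemma card_inter_sides (T : Finset (ℕ × ℕ)) {x y z : ℕ} (hxy : x < y) (hyz : y < z) :
    #(T ∩ sides (x, y, z)) = (if (x, y) ∈ T then 1 else 0) + (if (y, z) ∈ T then 1 else 0) +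
      (if (x, z) ∈ T then 1 else 0) := by
  rw [inter_comm, ← filter_mem_eq_inter, card_filter, sides, sum_insert, sum_insert,
    sum_singleton, add_assoc]
  · simp; omega
  · simp; omega

lemma card_inter_sides_eq_three_iff (T : Finset (ℕ × ℕ)) {x y z : ℕ} (hxy : x < y)
    (hyz : y < z) :
    #(T ∩ sides (x, y, z)) = 3 ↔ (x, y) ∈ T ∧ (y, z) ∈ T ∧ (x, z) ∈ T := by
  rw [card_inter_sides T hxy hyz]
  by_cases m₁ : (x, y) ∈ T <;> by_cases m₂ : (y, z) ∈ T <;> by_cases m₃ : (x, z) ∈ T <;>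
    simp [m₁, m₂, m₃]

/-- The triangle cut off by a short chord; `(0, k - 2)` and `(1, k - 1)` cut off the vertex
`k - 1`, resp. `0`. -/
def ear (k : ℕ) (d : ℕ × ℕ) : ℕ × ℕ × ℕ :=
  if d.2 = d.1 + 2 then (d.1, d.1 + 1, d.2)
  else if d.1 = 0 then (0, k - 2, k - 1) else (0, 1, k - 1)

section

variable {k : ℕ} {T : Finset (ℕ × ℕ)}

lemma IsFace.mem_or {x y z : ℕ} (hf : IsFace k T x y z) :
    ((x, y) ∈ T ∨ y = x + 1) ∧ ((y, z) ∈ T ∨ z = y + 1) ∧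
      ((x, z) ∈ T ∨ x = 0 ∧ z = k - 1) := by
  obtain ⟨hxy, hyz, hzk, h₁, h₂, h₃⟩ := hf
  simp only [IsSide, Prod.mk.injEq] at h₁ h₂ h₃
  refine ⟨h₁.imp_right ?_, h₂.imp_right ?_, h₃.imp_right ?_⟩ <;> intro h <;> omega

lemma isFace_of_mem_or {x y z : ℕ} (hxy : x < y) (hyz : y < z) (hzk : z < k)
    (h₁ : (x, y) ∈ T ∨ y = x + 1) (h₂ : (y, z) ∈ T ∨ z = y + 1)
    (h₃ : (x, z) ∈ T ∨ x = 0 ∧ z = k - 1) : IsFace k T x y z := by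
  refine ⟨hxy, hyz, hzk, h₁.imp_right ?_, h₂.imp_right ?_, h₃.imp_right ?_⟩ <;> intro h <;>
    simp only [Prod.mk.injEq] <;> omega

lemma card_inter_sides_mem_Icc (hk : 4 ≤ k) :
    ∀ f ∈ faces k T, #(T ∩ sides f) ∈ Set.Icc 1 3 := by
  rintro ⟨x, y, z⟩ hf
  rw [mem_faces] at hf
  obtain ⟨h₁, h₂, h₃⟩ := hf.mem_or
  rw [card_inter_sides T hf.1 hf.2.1]
  by_cases m₁ : (x, y) ∈ T <;> by_cases m₂ : (y, z) ∈ T <;> by_cases m₃ : (x, z) ∈ T <;>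
    simp only [m₁, m₂, m₃, if_true, if_false, false_or, Set.mem_Icc] at h₁ h₂ h₃ ⊢ <;>
    omega

namespace IsTriangulation

lemma isDiag_of_mem (hT : IsTriangulation k T) {d : ℕ × ℕ} (hd : d ∈ T) :
    d.1 + 2 ≤ d.2 ∧ d.2 < k ∧ ¬(d.1 = 0 ∧ d.2 = k - 1) := by
  have := hT.2.1 d hd; unfold IsDiag at this; omega

lemma notMem_of_lt (hT : IsTriangulation k T) {a b : ℕ} (h : b < a + 2) :
    (a, b) ∉ T := fun hab => by have := (hT.isDiag_of_mem hab).1; simp only at this; omega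

lemma root_notMem (hT : IsTriangulation k T) : (0, k - 1) ∉ T :=
  fun h => (hT.isDiag_of_mem h).2.2 ⟨rfl, rfl⟩

lemma snd_lt (hT : IsTriangulation k T) {d : ℕ × ℕ} (hd : IsSide k T d)
    (h : d.1 < d.2) : d.2 < k := by
  rcases hd with hd | hd | rfl
  · exact (hT.isDiag_of_mem hd).2.1
  · omega
  · simp at h ⊢; omega

lemma not_cross (hT : IsTriangulation k T) {d e : ℕ × ℕ}
    (hd : IsSide k T d) (he : IsSide k T e) : ¬ Cross d e := by
  rcases hd with hd | hd | rfl <;> rcases he with he | he | rfl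
  all_goals first
    | exact hT.2.2 d hd e he
    | (unfold Cross; have := hT.isDiag_of_mem hd; omega)
    | (unfold Cross; have := hT.isDiag_of_mem he; omega)
    | (unfold Cross; omega)

lemma isSide_of_forall_not_cross (hT : IsTriangulation k T) {a b : ℕ}
    (hab : a < b) (hbk : b < k) (h : ∀ e, IsSide k T e → ¬ Cross e (a, b)) :
    IsSide k T (a, b) := by
  by_contra hns
  simp only [IsSide, not_or, Prod.mk.injEq] at hns
  obtain ⟨hnT, hedge, hroot⟩ := hns
  have hdiag : ∀ d ∈ insert (a, b) T, IsDiag k d := by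
    simp only [mem_insert, forall_eq_or_imp]
    exact ⟨by unfold IsDiag; omega, hT.2.1⟩
  have hnc : ∀ d ∈ insert (a, b) T, ∀ e ∈ insert (a, b) T, ¬ Cross d e := by
    simp only [mem_insert, forall_eq_or_imp]
    refine ⟨⟨by unfold Cross; omega, fun e he => cross_comm.not.2 (h e (Or.inl he))⟩,
      fun d hd => ⟨h d (Or.inl hd), hT.2.2 d hd⟩⟩
  have := card_le_of_pairwise_not_cross hdiag hnc
  rw [card_insert_of_notMem hnT, hT.1] at this
  omega

lemma apex_unique (hT : IsTriangulation k T) {x y y' z : ℕ}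
    (hf : IsFace k T x y z) (hf' : IsFace k T x y' z) : y = y' := by
  obtain ⟨hxy, hyz, -, hxy', hyz', -⟩ := hf
  obtain ⟨hxy₁, hyz₁, -, hxy₁', hyz₁', -⟩ := hf'
  have h₁ := hT.not_cross hyz' hxy₁'
  have h₂ := hT.not_cross hyz₁' hxy'
  unfold Cross at h₁ h₂; omega

lemma eq_of_mem_short_sides (hT : IsTriangulation k T) {x y z x' y' z' : ℕ}
    {d : ℕ × ℕ} (hf : IsFace k T x y z) (hf' : IsFace k T x' y' z')
    (hd : d = (x, y) ∨ d = (y, z)) (hd' : d = (x', y') ∨ d = (y', z')) :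
    (x, y, z) = (x', y', z') := by
  obtain ⟨hxy, hyz, -, s₁, s₂, s₃⟩ := hf
  obtain ⟨hxy', hyz', -, s₁', s₂', s₃'⟩ := hf'
  have h₁ := hT.not_cross s₃ s₃'
  have h₂ := hT.not_cross s₃ s₁'
  have h₃ := hT.not_cross s₃ s₂'
  have h₄ := hT.not_cross s₃' s₁
  have h₅ := hT.not_cross s₃' s₂
  unfold Cross at h₁ h₂ h₃ h₄ h₅
  simp only [Prod.ext_iff] at hd hd' ⊢
  omega

lemma exists_apex (hT : IsTriangulation k T) {a b : ℕ}
    (hab : IsSide k T (a, b)) (h2 : a + 2 ≤ b) : ∃ c, IsFace k T a c b := by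
  have hbk : b < k := hT.snd_lt hab (by simp only; omega)
  set C := (Ioo a b).filter fun v => IsSide k T (a, v)
  have hC : a + 1 ∈ C := by simp [C, IsSide]; omega
  obtain ⟨c, hcC, hmax⟩ := exists_max_image C id ⟨_, hC⟩
  simp only [C, mem_filter, mem_Ioo] at hcC
  obtain ⟨⟨hac, hcb⟩, hac'⟩ := hcC
  -- `c` is the farthest neighbour of `a` before `b`; a side crossing `(c, b)` would beat it
  refine ⟨c, hac, hcb, hbk, hac', hT.isSide_of_forall_not_cross hcb hbk ?_, hab⟩
  rintro ⟨u, v⟩ he hcross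
  have h₁ := hT.not_cross he hab
  have h₂ := hT.not_cross he hac'
  have h₃ : ¬(u = a ∧ c < v ∧ v < b) := by
    rintro ⟨rfl, hcv, hvb⟩
    have := hmax v (by simp [C, he]; omega)
    simp only [id] at this; omega
  unfold Cross at h₁ h₂ hcross; simp only at h₁ h₂ hcross; omega

lemma exists_isFace_of_isSide (hT : IsTriangulation k T) {a b : ℕ}
    (hab : IsSide k T (a, b)) (hlt : a < b) (hroot : (a, b) ≠ (0, k - 1)) :
    ∃ x y z, IsFace k T x y z ∧ ((a, b) = (x, y) ∨ (a, b) = (y, z)) := by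
  have hbk : b < k := hT.snd_lt hab hlt
  set C := (range k ×ˢ range k).filter
    fun e => IsSide k T e ∧ e.1 ≤ a ∧ b ≤ e.2 ∧ e ≠ (a, b)
  have hC : (0, k - 1) ∈ C := by
    refine mem_filter.2 ⟨?_, Or.inr (Or.inr rfl), by simp, by simp; omega, ?_⟩
    · simp; omega
    simp only [ne_eq, Prod.mk.injEq] at hroot ⊢; omega
  -- the shortest side enclosing `(a, b)`: its face on the inner side has `(a, b)` as a side
  obtain ⟨⟨x, z⟩, hxzC, hmin⟩ := exists_min_image C (fun e => e.2 - e.1) ⟨_, hC⟩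
  simp only [C, mem_filter, mem_product, mem_range, ne_eq, Prod.mk.injEq] at hxzC
  obtain ⟨-, hxz, hxa, hbz, hne⟩ := hxzC
  obtain ⟨y, hf⟩ := hT.exists_apex hxz (by omega)
  have shorter : ∀ u v, IsSide k T (u, v) → u ≤ a → b ≤ v → v < k → v - u < z - x →
      (u, v) = (a, b) := by
    intro u v huv hua hbv hvk hlen
    by_contra h
    have := hmin (u, v) (by simp [C, huv, hua, hbv, h]; omega)
    simp only at this; omega
  have h₁ := hT.not_cross hf.2.2.2.1 hab
  have h₂ := hT.not_cross hf.2.2.2.2.1 hab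
  have h₃ := shorter x y hf.2.2.2.1
  have h₄ := shorter y z hf.2.2.2.2.1
  refine ⟨x, y, z, hf, ?_⟩
  obtain ⟨hxy, hyz, hzk, -⟩ := hf
  unfold Cross at h₁ h₂
  simp only [Prod.ext_iff] at h₁ h₂ h₃ h₄ hne ⊢
  omega

lemma card_faces_filter_mem_sides (hT : IsTriangulation k T) {d : ℕ × ℕ}
    (hd : d ∈ T) : #((faces k T).filter (d ∈ sides ·)) = 2 := by
  obtain ⟨a, b⟩ := d
  have hab := hT.isDiag_of_mem hd
  simp only at hab
  obtain ⟨c, hc⟩ := hT.exists_apex (Or.inl hd) hab.1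
  obtain ⟨x, y, z, hf, hshort⟩ :=
    hT.exists_isFace_of_isSide (Or.inl hd) (by omega) (by simp only [ne_eq, Prod.mk.injEq]; omega)
  rw [card_eq_two]
  refine ⟨(a, c, b), (x, y, z), ?_, ?_⟩
  · have := hf.1; have := hf.2.1
    simp only [ne_eq, Prod.mk.injEq] at hshort ⊢; omega
  ext ⟨u, v, w⟩
  simp only [mem_filter, mem_faces, sides, mem_insert, mem_singleton]
  constructor
  · rintro ⟨hf', hmem | hmem | hmem⟩
    · exact Or.inr (hT.eq_of_mem_short_sides hf' hf (Or.inl hmem) hshort)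
    · exact Or.inr (hT.eq_of_mem_short_sides hf' hf (Or.inr hmem) hshort)
    · simp only [Prod.mk.injEq] at hmem
      obtain ⟨rfl, rfl⟩ := hmem
      rw [hT.apex_unique hf' hc]
      exact Or.inl rfl
  · rintro (h | h) <;> simp only [Prod.mk.injEq] at h <;> obtain ⟨rfl, rfl, rfl⟩ := h
    · exact ⟨hc, by simp⟩
    · simp only [Prod.mk.injEq] at hshort ⊢
      exact ⟨hf, by tauto⟩

lemma card_faces (hT : IsTriangulation k T) (hk : 3 ≤ k) :
    #(faces k T) = k - 2 := by
  have himage : (faces k T).image (fun f => (f.1, f.2.2)) = insert (0, k - 1) T := by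
    ext ⟨a, b⟩
    simp only [mem_image, mem_insert, Prod.exists, mem_faces, Prod.mk.injEq]
    constructor
    · rintro ⟨x, y, z, hf, rfl, rfl⟩
      exact (hf.mem_or.2.2).symm
    · intro h
      obtain ⟨c, hc⟩ : ∃ c, IsFace k T a c b := by
        rcases h with ⟨rfl, rfl⟩ | h
        · exact hT.exists_apex (Or.inr (Or.inr rfl)) (by omega)
        · exact hT.exists_apex (Or.inl h) (hT.isDiag_of_mem h).1
      exact ⟨a, c, b, hc, rfl, rfl⟩
  have hinj : Set.InjOn (fun f : ℕ × ℕ × ℕ => (f.1, f.2.2)) (faces k T) := by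
    rintro ⟨x, y, z⟩ hf ⟨x', y', z'⟩ hf' h
    simp only [mem_coe, mem_faces, Prod.mk.injEq] at hf hf' h
    obtain ⟨rfl, rfl⟩ := h
    rw [hT.apex_unique hf hf']
  rw [← card_image_of_injOn hinj, himage, card_insert_of_notMem hT.root_notMem, hT.1]
  omega

lemma sum_card_inter_sides (hT : IsTriangulation k T) :
    ∑ f ∈ faces k T, #(T ∩ sides f) = 2 * (k - 3) := by
  calc ∑ f ∈ faces k T, #(T ∩ sides f)
      = ∑ f ∈ faces k T, #(T.bipartiteAbove (fun f d => d ∈ sides f) f) := by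
        simp only [bipartiteAbove, filter_mem_eq_inter]
    _ = ∑ d ∈ T, #((faces k T).bipartiteBelow (fun f d => d ∈ sides f) d) :=
        sum_card_bipartiteAbove_eq_sum_card_bipartiteBelow _
    _ = ∑ d ∈ T, 2 := sum_congr rfl fun d hd => hT.card_faces_filter_mem_sides hd
    _ = 2 * (k - 3) := by rw [sum_const, hT.1, smul_eq_mul, mul_comm]

lemma triangleFree_iff (hT : IsTriangulation k T) :
    TriangleFree T ↔ ∀ f ∈ faces k T, #(T ∩ sides f) ≠ 3 := by
  constructor
  · rintro htf ⟨x, y, z⟩ hf h3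
    rw [mem_faces] at hf
    obtain ⟨h₁, h₂, h₃⟩ := (card_inter_sides_eq_three_iff T hf.1 hf.2.1).1 h3
    exact htf ⟨x, y, z, hf.1, hf.2.1, h₁, h₂, h₃⟩
  · rintro h ⟨a, b, c, hab, hbc, h₁, h₂, h₃⟩
    refine h (a, b, c) (mem_faces.2 (isFace_of_mem_or hab hbc (hT.isDiag_of_mem h₃).2.1
      (Or.inl h₁) (Or.inl h₂) (Or.inl h₃))) ?_
    exact (card_inter_sides_eq_three_iff T hab hbc).2 ⟨h₁, h₂, h₃⟩

lemma ear_mem_faces (hT : IsTriangulation k T) (hk : 4 < k) {d : ℕ × ℕ} (hd : d ∈ T)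
    (hshort : IsShort k d) : ear k d ∈ faces k T ∧ #(T ∩ sides (ear k d)) = 1 := by
  obtain ⟨a, b⟩ := d
  have hab := hT.isDiag_of_mem hd
  simp only [IsShort] at hab hshort
  rcases hshort with rfl | ⟨rfl, rfl⟩ | ⟨rfl, rfl⟩
  · rw [ear, if_pos rfl]
    refine ⟨mem_faces.2 (isFace_of_mem_or (by omega) (by omega) hab.2.1 (Or.inr rfl)
      (Or.inr rfl) (Or.inl hd)), ?_⟩
    rw [card_inter_sides T (by omega) (by omega)]
    simp [hd, hT.notMem_of_lt (a := a) (b := a + 1) (by omega),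
      hT.notMem_of_lt (a := a + 1) (b := a + 2) (by omega)]
  · rw [ear, if_neg (by simp only; omega), if_pos rfl]
    refine ⟨mem_faces.2 (isFace_of_mem_or (by omega) (by omega) (by omega) (Or.inl hd)
      (Or.inr (by omega)) (Or.inr ⟨rfl, rfl⟩)), ?_⟩
    rw [card_inter_sides T (by omega) (by omega)]
    simp [hd, hT.root_notMem, hT.notMem_of_lt (a := k - 2) (b := k - 1) (by omega)]
  · rw [ear, if_neg (by simp only; omega), if_neg (by simp only; omega)]
    refine ⟨mem_faces.2 (isFace_of_mem_or (by omega) (by omega) (by omega) (Or.inr rfl)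
      (Or.inl hd) (Or.inr ⟨rfl, rfl⟩)), ?_⟩
    rw [card_inter_sides T (by omega) (by omega)]
    simp [hd, hT.root_notMem, hT.notMem_of_lt (a := 0) (b := 1) (by omega)]

lemma exists_isShort_of_card_inter_sides_eq_one (hT : IsTriangulation k T)
    (hk : 4 < k) {x y z : ℕ} (hf : IsFace k T x y z) (h1 : #(T ∩ sides (x, y, z)) = 1) :
    ∃ d ∈ T, IsShort k d ∧ ear k d = (x, y, z) := by
  obtain ⟨h₁, h₂, h₃⟩ := hf.mem_or
  obtain ⟨hxy, hyz, hzk, -⟩ := hf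
  rw [card_inter_sides T hxy hyz] at h1
  rcases h₃ with m₃ | ⟨rfl, rfl⟩
  · have m₁ : (x, y) ∉ T := fun m₁ => by simp [m₁, m₃] at h1
    have m₂ : (y, z) ∉ T := fun m₂ => by simp [m₂, m₃] at h1
    simp only [m₁, m₂, false_or] at h₁ h₂
    refine ⟨(x, z), m₃, Or.inl (by simp only; omega), ?_⟩
    rw [ear, if_pos (by simp only; omega), Prod.mk.injEq, Prod.mk.injEq]
    omega
  · simp only [hT.root_notMem, if_false, add_zero] at h1
    rcases h₁ with m₁ | rfl
    · have m₂ : (y, k - 1) ∉ T := fun m₂ => by simp [m₁, m₂] at h1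
      simp only [m₂, false_or] at h₂
      refine ⟨(0, y), m₁, Or.inr (Or.inl ⟨rfl, by omega⟩), ?_⟩
      rw [ear, if_neg (by simp only; omega), if_pos rfl, Prod.mk.injEq, Prod.mk.injEq]
      omega
    · have m₂ : (1, k - 1) ∈ T := by
        by_contra m₂
        simp [m₂, hT.notMem_of_lt (a := 0) (b := 0 + 1) (by omega)] at h1
      refine ⟨(1, k - 1), m₂, Or.inr (Or.inr ⟨rfl, rfl⟩), ?_⟩
      rw [ear, if_neg (by simp only; omega), if_neg (by simp only; omega)]

lemma card_filter_isShort (hT : IsTriangulation k T) (hk : 4 < k) :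
    #(T.filter fun d => IsShort k d) = #((faces k T).filter fun f => #(T ∩ sides f) = 1) := by
  refine card_bij (fun d _ => ear k d) ?_ ?_ ?_
  · intro d hd
    rw [mem_filter] at hd ⊢
    exact hT.ear_mem_faces hk hd.1 hd.2
  · rintro ⟨a, b⟩ hd ⟨a', b'⟩ hd' heq
    obtain ⟨hdT, hs⟩ := mem_filter.1 hd
    obtain ⟨hdT', hs'⟩ := mem_filter.1 hd'
    have := hT.isDiag_of_mem hdT
    have := hT.isDiag_of_mem hdT'
    simp only [IsShort, ear] at hs hs' heq this ⊢
    split_ifs at heq <;> simp only [Prod.mk.injEq] at heq ⊢ <;> omega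
  · rintro ⟨x, y, z⟩ hf
    rw [mem_filter, mem_faces] at hf
    obtain ⟨d, hd, hshort, hear⟩ := hT.exists_isShort_of_card_inter_sides_eq_one hk hf.1 hf.2
    exact ⟨d, mem_filter.2 ⟨hd, hshort⟩, hear⟩

end IsTriangulation

end

theorem stmt10 (k : ℕ) (hk : 4 < k) (T : Finset (ℕ × ℕ)) (hT : IsTriangulation k T) :
    TriangleFree T ↔ (T.filter fun d => IsShort k d).card = 2 := by
  have hcount := two_mul_card_add_card_filter_eq_three (faces k T) (fun f => #(T ∩ sides f))
    (card_inter_sides_mem_Icc (by omega))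
  rw [hT.card_faces (by omega), hT.sum_card_inter_sides] at hcount
  rw [hT.triangleFree_iff, hT.card_filter_isShort hk, ← filter_eq_empty_iff, ← card_eq_zero]
  omega
end

section
/- Let k ≥ 5 and let T be a triangle-free triangulation of a convex k-gon. Then T admits exactly two proper colorings, i.e., exactly two bijective labelings of its k−3 chords by {0, 1, …, k−4} such that (i) the chord labeled 0 is a short chord, and (ii) whenever two chords lie on a common triangle of T, their labels are consecutive integers. -/
/-- The pair `p` (with `p.1 < p.2`) is a side available to triangles: either a diagonal
of `T` or a boundary edge of the polygon. -/
def SideOk (k : ℕ) (T : Finset (ℕ × ℕ)) (p : ℕ × ℕ) : Prop :=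
  p ∈ T ∨ p.2 = p.1 + 1 ∨ (p.1 = 0 ∧ p.2 = k - 1)

/-- `t = (a, b, c)` with `a < b < c < k` is a triangle of the triangulation `T`. -/
def IsTri (k : ℕ) (T : Finset (ℕ × ℕ)) (t : ℕ × ℕ × ℕ) : Prop :=
  t.1 < t.2.1 ∧ t.2.1 < t.2.2 ∧ t.2.2 < k ∧
    SideOk k T (t.1, t.2.1) ∧ SideOk k T (t.2.1, t.2.2) ∧ SideOk k T (t.1, t.2.2)

/-- `d` is one of the three sides of the triangle `t`. -/
def TriSide (t : ℕ × ℕ × ℕ) (d : ℕ × ℕ) : Prop :=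
  d = (t.1, t.2.1) ∨ d = (t.2.1, t.2.2) ∨ d = (t.1, t.2.2)

/-- A proper coloring of the triangulation `T` of the convex `k`-gon: a bijective
labeling of its `k − 3` chords by `{0, …, k−4}` such that the chord labeled `0` is a
short chord and chords lying on a common triangle get consecutive labels. -/
def ProperColoring (k : ℕ) (T : Finset (ℕ × ℕ)) (f : {d // d ∈ T} ≃ Fin (k - 3)) : Prop :=
  (∀ d : {d // d ∈ T}, (f d : ℕ) = 0 → IsShort k d.1) ∧
  ∀ d e : {d // d ∈ T}, d ≠ e →
    (∃ t : ℕ × ℕ × ℕ, IsTri k T t ∧ TriSide t d.1 ∧ TriSide t e.1) →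
    ((f d : ℕ) = (f e : ℕ) + 1 ∨ (f e : ℕ) = (f d : ℕ) + 1)

namespace PolygonTriangulation
/-! The induction removes ears, so it runs over polygons whose vertex set is an arbitrary
`V : Finset ℕ`, in cyclic order by `<`; for `V = range k` the notions below are those of the
statement. -/

def Noncrossing (T : Finset (ℕ × ℕ)) : Prop := ∀ d ∈ T, ∀ e ∈ T, ¬ Cross d e

def IsChord (V : Finset ℕ) (d : ℕ × ℕ) : Prop :=
  d.1 ∈ V ∧ d.2 ∈ V ∧ d.1 < d.2 ∧ (∃ v ∈ V, d.1 < v ∧ v < d.2) ∧ (∃ v ∈ V, v < d.1 ∨ d.2 < v)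

def IsSuccEdge (V : Finset ℕ) (x y : ℕ) : Prop :=
  x ∈ V ∧ y ∈ V ∧ x < y ∧ ∀ v ∈ V, ¬(x < v ∧ v < y)

def IsWrapEdge (V : Finset ℕ) (x y : ℕ) : Prop :=
  x ∈ V ∧ y ∈ V ∧ x < y ∧ (∀ v ∈ V, ¬ v < x) ∧ (∀ v ∈ V, ¬ y < v)

def IsSide (V : Finset ℕ) (T : Finset (ℕ × ℕ)) (p : ℕ × ℕ) : Prop :=
  p ∈ T ∨ IsSuccEdge V p.1 p.2 ∨ IsWrapEdge V p.1 p.2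

def IsTriangle (V : Finset ℕ) (T : Finset (ℕ × ℕ)) (t : ℕ × ℕ × ℕ) : Prop :=
  t.1 < t.2.1 ∧ t.2.1 < t.2.2 ∧
    IsSide V T (t.1, t.2.1) ∧ IsSide V T (t.2.1, t.2.2) ∧ IsSide V T (t.1, t.2.2)

def IsShortChord (V : Finset ℕ) (d : ℕ × ℕ) : Prop :=
  (V.filter (fun v => d.1 < v ∧ v < d.2)).card = 1 ∨
    (V.filter (fun v => v < d.1 ∨ d.2 < v)).card = 1

def ShareTriangle (V : Finset ℕ) (T : Finset (ℕ × ℕ)) (d e : ℕ × ℕ) : Prop :=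
  ∃ t, IsTriangle V T t ∧ TriSide t d ∧ TriSide t e

lemma ShareTriangle.symm {V : Finset ℕ} {T : Finset (ℕ × ℕ)} {d e : ℕ × ℕ}
    (h : ShareTriangle V T d e) : ShareTriangle V T e d :=
  let ⟨t, ht, hd, he⟩ := h
  ⟨t, ht, he, hd⟩

lemma Noncrossing.mono {S T : Finset (ℕ × ℕ)} (hT : Noncrossing T) (hST : S ⊆ T) :
    Noncrossing S :=
  fun d hd e he => hT d (hST hd) e (hST he)

lemma triangleFree_of_subset {S T : Finset (ℕ × ℕ)} (hT : TriangleFree T) (hST : S ⊆ T) :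
    TriangleFree S :=
  fun ⟨x, y, z, hxy, hyz, h₁, h₂, h₃⟩ => hT ⟨x, y, z, hxy, hyz, hST h₁, hST h₂, hST h₃⟩

section Triangles

variable {V : Finset ℕ} {T : Finset (ℕ × ℕ)}

lemma IsSide.mem (hT : ∀ d ∈ T, IsChord V d) {p : ℕ × ℕ} (h : IsSide V T p) :
    p.1 ∈ V ∧ p.2 ∈ V := by
  rcases h with h | h | h
  · exact ⟨(hT _ h).1, (hT _ h).2.1⟩
  · exact ⟨h.1, h.2.1⟩
  · exact ⟨h.1, h.2.1⟩

lemma IsTriangle.mem (hT : ∀ d ∈ T, IsChord V d) {t : ℕ × ℕ × ℕ} (h : IsTriangle V T t) :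
    t.1 ∈ V ∧ t.2.1 ∈ V ∧ t.2.2 ∈ V :=
  ⟨(h.2.2.1.mem hT).1, (h.2.2.2.1.mem hT).1, (h.2.2.2.1.mem hT).2⟩

lemma IsSide.mem_of_exists {x y : ℕ} (h : IsSide V T (x, y))
    (hin : ∃ v ∈ V, x < v ∧ v < y) (hout : ∃ v ∈ V, v < x ∨ y < v) : (x, y) ∈ T := by
  obtain ⟨v, hv, hxv, hvy⟩ := hin
  obtain ⟨u, hu, hux⟩ := hout
  rcases h with h | h | h
  · exact h
  · exact absurd ⟨hxv, hvy⟩ (h.2.2.2 v hv)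
  · rcases hux with hux | hux
    exacts [absurd hux (h.2.2.2.1 u hu), absurd hux (h.2.2.2.2 u hu)]

lemma IsTriangle.eq_of_fst_thd (hT : ∀ d ∈ T, IsChord V d) (hnc : Noncrossing T) {x y w w' : ℕ}
    (ht : IsTriangle V T (x, w, y)) (ht' : IsTriangle V T (x, w', y)) : w = w' := by
  by_contra hne
  wlog hlt : w < w' generalizing w w'
  · exact this ht' ht (Ne.symm hne) (by omega)
  obtain ⟨hxV, hwV, hyV⟩ := ht.mem hT
  have hw'V := (ht'.mem hT).2.1
  obtain ⟨hxw, hwy, -, hwy_side, -⟩ := ht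
  obtain ⟨-, hw'y, hxw'_side, -, -⟩ := ht'
  have hwy_mem := hwy_side.mem_of_exists ⟨w', hw'V, hlt, hw'y⟩ ⟨x, hxV, Or.inl hxw⟩
  have hxw'_mem := hxw'_side.mem_of_exists ⟨w, hwV, hxw, hlt⟩ ⟨y, hyV, Or.inr hw'y⟩
  exact hnc _ hxw'_mem _ hwy_mem (Or.inl ⟨hxw, hlt, hw'y⟩)

lemma IsTriangle.eq_of_fst_snd (hT : ∀ d ∈ T, IsChord V d) (hnc : Noncrossing T) {x y c c' : ℕ}
    (ht : IsTriangle V T (x, y, c)) (ht' : IsTriangle V T (x, y, c')) : c = c' := by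
  by_contra hne
  wlog hlt : c < c' generalizing c c'
  · exact this ht' ht (Ne.symm hne) (by omega)
  obtain ⟨hxV, hyV, hcV⟩ := ht.mem hT
  have hc'V := (ht'.mem hT).2.2
  obtain ⟨hxy, hyc, -, -, hxc_side⟩ := ht
  obtain ⟨-, -, -, hyc'_side, -⟩ := ht'
  have hxc_mem := hxc_side.mem_of_exists ⟨y, hyV, hxy, hyc⟩ ⟨c', hc'V, Or.inr hlt⟩
  have hyc'_mem := hyc'_side.mem_of_exists ⟨c, hcV, hyc, hlt⟩ ⟨x, hxV, Or.inl hxy⟩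
  exact hnc _ hxc_mem _ hyc'_mem (Or.inl ⟨hxy, hyc, hlt⟩)

lemma IsTriangle.eq_of_snd_thd (hT : ∀ d ∈ T, IsChord V d) (hnc : Noncrossing T) {x y c c' : ℕ}
    (ht : IsTriangle V T (c, x, y)) (ht' : IsTriangle V T (c', x, y)) : c = c' := by
  by_contra hne
  wlog hlt : c < c' generalizing c c'
  · exact this ht' ht (Ne.symm hne) (by omega)
  obtain ⟨hcV, hxV, hyV⟩ := ht.mem hT
  have hc'V := (ht'.mem hT).1
  obtain ⟨-, hxy, hcx_side, -, -⟩ := ht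
  obtain ⟨hc'x, -, -, -, hc'y_side⟩ := ht'
  have hcx_mem := hcx_side.mem_of_exists ⟨c', hc'V, hlt, hc'x⟩ ⟨y, hyV, Or.inr hxy⟩
  have hc'y_mem := hc'y_side.mem_of_exists ⟨x, hxV, hc'x, hxy⟩ ⟨c, hcV, Or.inl hlt⟩
  exact hnc _ hcx_mem _ hc'y_mem (Or.inl ⟨hlt, hc'x, hxy⟩)

/-- Both triangles would lie on the outer side of `(x, y)`, which wraps around the end of the
vertex order. -/
lemma IsTriangle.not_fst_snd_of_snd_thd (hT : ∀ d ∈ T, IsChord V d) (hnc : Noncrossing T)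
    {x y c c' : ℕ} (ht : IsTriangle V T (x, y, c)) (ht' : IsTriangle V T (c', x, y)) : False := by
  obtain ⟨hxV, hyV, hcV⟩ := ht.mem hT
  have hc'V := (ht'.mem hT).1
  obtain ⟨hxy, hyc, -, -, hxc_side⟩ := ht
  obtain ⟨hc'x, -, -, -, hc'y_side⟩ := ht'
  have hxc_mem := hxc_side.mem_of_exists ⟨y, hyV, hxy, hyc⟩ ⟨c', hc'V, Or.inl hc'x⟩
  have hc'y_mem := hc'y_side.mem_of_exists ⟨x, hxV, hc'x, hxy⟩ ⟨c, hcV, Or.inr hyc⟩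
  exact hnc _ hc'y_mem _ hxc_mem (Or.inl ⟨hc'x, hxy, hyc⟩)

/-- A chord lies on at most one triangle on each side; `t` is on the inner side of `d` exactly when
`d` is its long side `(t.1, t.2.2)`. -/
lemma IsTriangle.eq_of_triSide (hT : ∀ d ∈ T, IsChord V d) (hnc : Noncrossing T)
    {t t' : ℕ × ℕ × ℕ} {d : ℕ × ℕ} (ht : IsTriangle V T t) (ht' : IsTriangle V T t')
    (hd : TriSide t d) (hd' : TriSide t' d) (hlong : d = (t.1, t.2.2) ↔ d = (t'.1, t'.2.2)) :
    t = t' := by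
  obtain ⟨a, b, c⟩ := t
  obtain ⟨a', b', c'⟩ := t'
  have hab : a < b := ht.1
  have hbc : b < c := ht.2.1
  have hab' : a' < b' := ht'.1
  have hbc' : b' < c' := ht'.2.1
  rcases hd with rfl | rfl | rfl <;> simp only [TriSide, Prod.mk.injEq] at hd' hlong <;>
    rcases hd' with ⟨rfl, rfl⟩ | ⟨rfl, rfl⟩ | ⟨rfl, rfl⟩
  · rw [ht.eq_of_fst_snd hT hnc ht']
  · exact (ht.not_fst_snd_of_snd_thd hT hnc ht').elim
  · omega
  · exact (ht'.not_fst_snd_of_snd_thd hT hnc ht).elim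
  · rw [ht.eq_of_snd_thd hT hnc ht']
  · omega
  · simp only [true_and, true_iff] at hlong
    omega
  · simp only [and_true, true_iff] at hlong
    omega
  · rw [ht.eq_of_fst_thd hT hnc ht']

lemma eq_of_triSide_of_triangleFree (htf : TriangleFree T) {a b c : ℕ} (hab : a < b) (hbc : b < c)
    {d e e' : ℕ × ℕ} (hd : TriSide (a, b, c) d) (he : TriSide (a, b, c) e)
    (he' : TriSide (a, b, c) e') (hdT : d ∈ T) (heT : e ∈ T) (he'T : e' ∈ T) (hed : e ≠ d)
    (he'd : e' ≠ d) : e = e' := by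
  simp only [TriSide] at hd he he'
  rcases hd with rfl | rfl | rfl <;> rcases he with rfl | rfl | rfl <;>
    rcases he' with rfl | rfl | rfl <;>
    first
    | rfl
    | exact absurd rfl hed
    | exact absurd rfl he'd
    | exact (htf ⟨a, b, c, hab, hbc, ‹_›, ‹_›, ‹_›⟩).elim

/-- Two of the three triangles lie on the same side of `d`, hence coincide, and then all three
sides of that triangle are chords. -/
lemma not_three_shareTriangle (hT : ∀ d ∈ T, IsChord V d) (hnc : Noncrossing T)
    (htf : TriangleFree T) {d e₁ e₂ e₃ : ℕ × ℕ} (hdT : d ∈ T) (he₁T : e₁ ∈ T) (he₂T : e₂ ∈ T)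
    (he₃T : e₃ ∈ T) (h₁₂ : e₁ ≠ e₂) (h₁₃ : e₁ ≠ e₃) (h₂₃ : e₂ ≠ e₃) (he₁d : e₁ ≠ d)
    (he₂d : e₂ ≠ d) (he₃d : e₃ ≠ d) (s₁ : ShareTriangle V T d e₁) (s₂ : ShareTriangle V T d e₂)
    (s₃ : ShareTriangle V T d e₃) : False := by
  have key : ∀ {t t' : ℕ × ℕ × ℕ} {e e' : ℕ × ℕ}, IsTriangle V T t → IsTriangle V T t' →
      TriSide t d → TriSide t' d → TriSide t e → TriSide t' e' → e ∈ T → e' ∈ T → e ≠ d →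
      e' ≠ d → (d = (t.1, t.2.2) ↔ d = (t'.1, t'.2.2)) → e = e' := by
    intro t t' e e' ht ht' hd hd' he he' heT he'T hed he'd hlong
    obtain rfl := ht.eq_of_triSide hT hnc ht' hd hd' hlong
    obtain ⟨a, b, c⟩ := t
    exact eq_of_triSide_of_triangleFree htf ht.1 ht.2.1 hd he he' hdT heT he'T hed he'd
  obtain ⟨t₁, ht₁, hd₁, he₁⟩ := s₁
  obtain ⟨t₂, ht₂, hd₂, he₂⟩ := s₂
  obtain ⟨t₃, ht₃, hd₃, he₃⟩ := s₃
  have pigeonhole : ∀ P Q R : Prop, (P ↔ Q) ∨ (P ↔ R) ∨ (Q ↔ R) := by tauto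
  rcases pigeonhole (d = (t₁.1, t₁.2.2)) (d = (t₂.1, t₂.2.2)) (d = (t₃.1, t₃.2.2)) with h | h | h
  · exact h₁₂ (key ht₁ ht₂ hd₁ hd₂ he₁ he₂ he₁T he₂T he₁d he₂d h)
  · exact h₁₃ (key ht₁ ht₃ hd₁ hd₃ he₁ he₃ he₁T he₃T he₁d he₃d h)
  · exact h₂₃ (key ht₂ ht₃ hd₂ hd₃ he₂ he₃ he₂T he₃T he₂d he₃d h)

end Triangles

section Ear

/-! An ear is a chord `(a, b) ∈ T` with a single vertex `m` of `V` strictly between its ends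
(hypothesis `hm`); removing it leaves the triangulation `T.erase (a, b)` of `V.erase m`. -/

variable {V W : Finset ℕ} {T : Finset (ℕ × ℕ)} {a b m x y : ℕ}

lemma IsSuccEdge.mono (h : IsSuccEdge V x y) (hWV : W ⊆ V) (hx : x ∈ W) (hy : y ∈ W) :
    IsSuccEdge W x y :=
  ⟨hx, hy, h.2.2.1, fun v hv => h.2.2.2 v (hWV hv)⟩

lemma IsWrapEdge.mono (h : IsWrapEdge V x y) (hWV : W ⊆ V) (hx : x ∈ W) (hy : y ∈ W) :
    IsWrapEdge W x y :=
  ⟨hx, hy, h.2.2.1, fun v hv => h.2.2.2.1 v (hWV hv), fun v hv => h.2.2.2.2 v (hWV hv)⟩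

lemma ear_apex_mem (hm : V.filter (fun v => a < v ∧ v < b) = {m}) : m ∈ V ∧ a < m ∧ m < b := by
  have h : m ∈ V.filter (fun v => a < v ∧ v < b) := by rw [hm]; exact Finset.mem_singleton_self m
  simpa using h

lemma eq_ear_apex (hm : V.filter (fun v => a < v ∧ v < b) = {m}) {v : ℕ} (hv : v ∈ V)
    (hav : a < v) (hvb : v < b) : v = m :=
  Finset.mem_singleton.1 (hm ▸ Finset.mem_filter.2 ⟨hv, hav, hvb⟩)

lemma ne_ear_apex (hT : ∀ d ∈ T, IsChord V d) (hnc : Noncrossing T) (hab : (a, b) ∈ T)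
    (hm : V.filter (fun v => a < v ∧ v < b) = {m}) {e : ℕ × ℕ} (he : e ∈ T) :
    e.1 ≠ m ∧ e.2 ≠ m := by
  obtain ⟨x, y⟩ := e
  obtain ⟨-, -, hxy, ⟨w, hwV, hxw, hwy⟩, -⟩ := hT _ he
  obtain ⟨-, ham, hmb⟩ := ear_apex_mem hm
  dsimp only at hxy hxw hwy ⊢
  constructor
  · rintro rfl
    by_cases hby : b < y
    · exact hnc _ hab _ he (Or.inl ⟨ham, hmb, hby⟩)
    · have := eq_ear_apex hm hwV (by omega) (by omega)
      omega
  · rintro rfl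
    by_cases hxa : x < a
    · exact hnc _ he _ hab (Or.inl ⟨hxa, ham, hmb⟩)
    · have := eq_ear_apex hm hwV (by omega) (by omega)
      omega

lemma IsSide.eq_ear_left (hT : ∀ d ∈ T, IsChord V d) (hnc : Noncrossing T) (hab : (a, b) ∈ T)
    (hm : V.filter (fun v => a < v ∧ v < b) = {m}) (h : IsSide V T (x, m)) : x = a := by
  obtain ⟨haV, hbV, -⟩ := hT _ hab
  obtain ⟨-, ham, hmb⟩ := ear_apex_mem hm
  rcases h with h | ⟨hxV, -, hxm, hsucc⟩ | ⟨-, -, -, -, hwrap⟩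
  · exact absurd rfl (ne_ear_apex hT hnc hab hm h).2
  · rcases lt_trichotomy x a with hxa | hxa | hax
    · exact absurd ⟨hxa, ham⟩ (hsucc a haV)
    · exact hxa
    · have := eq_ear_apex hm hxV hax (by omega)
      omega
  · exact absurd hmb (hwrap b hbV)

lemma IsSide.eq_ear_right (hT : ∀ d ∈ T, IsChord V d) (hnc : Noncrossing T) (hab : (a, b) ∈ T)
    (hm : V.filter (fun v => a < v ∧ v < b) = {m}) (h : IsSide V T (m, y)) : y = b := by
  obtain ⟨haV, hbV, -⟩ := hT _ hab
  obtain ⟨-, ham, hmb⟩ := ear_apex_mem hm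
  rcases h with h | ⟨-, hyV, hmy, hsucc⟩ | ⟨-, -, -, hwrap, -⟩
  · exact absurd rfl (ne_ear_apex hT hnc hab hm h).1
  · rcases lt_trichotomy y b with hyb | hyb | hby
    · have := eq_ear_apex hm hyV (by omega) hyb
      omega
    · exact hyb
    · exact absurd ⟨hmb, hby⟩ (hsucc b hbV)
  · exact absurd ham (hwrap a haV)

lemma isTriangle_ear (hT : ∀ d ∈ T, IsChord V d) (hab : (a, b) ∈ T)
    (hm : V.filter (fun v => a < v ∧ v < b) = {m}) : IsTriangle V T (a, m, b) := by
  obtain ⟨haV, hbV, -⟩ := hT _ hab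
  obtain ⟨hmV, ham, hmb⟩ := ear_apex_mem hm
  have hsucc₁ : IsSuccEdge V a m := ⟨haV, hmV, ham, fun v hv h => by
    have := eq_ear_apex hm hv h.1 (by omega)
    omega⟩
  have hsucc₂ : IsSuccEdge V m b := ⟨hmV, hbV, hmb, fun v hv h => by
    have := eq_ear_apex hm hv (by omega) h.2
    omega⟩
  exact ⟨ham, hmb, Or.inr (Or.inl hsucc₁), Or.inr (Or.inl hsucc₂), Or.inl hab⟩

lemma isChord_erase (hT : ∀ d ∈ T, IsChord V d) (hnc : Noncrossing T) (hab : (a, b) ∈ T)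
    (hm : V.filter (fun v => a < v ∧ v < b) = {m}) {e : ℕ × ℕ} (he : e ∈ T.erase (a, b)) :
    IsChord (V.erase m) e := by
  obtain ⟨hne, heT⟩ := Finset.mem_erase.1 he
  obtain ⟨x, y⟩ := e
  obtain ⟨hxV, hyV, hxy, ⟨w, hwV, hxw, hwy⟩, ⟨u, huV, hu⟩⟩ := hT _ heT
  obtain ⟨haV, hbV, hab', -⟩ := hT _ hab
  obtain ⟨-, ham, hmb⟩ := ear_apex_mem hm
  obtain ⟨hxm, hym⟩ := ne_ear_apex hT hnc hab hm heT
  dsimp only at *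
  refine ⟨Finset.mem_erase.2 ⟨hxm, hxV⟩, Finset.mem_erase.2 ⟨hym, hyV⟩, hxy, ?_, ?_⟩
  · by_cases hwm : w = m
    · subst hwm
      have hxa : x ≤ a := by
        by_contra
        have := eq_ear_apex hm hxV (by omega) (by omega)
        omega
      have hby : b ≤ y := by
        by_contra
        have := eq_ear_apex hm hyV (by omega) (by omega)
        omega
      by_cases hxa' : x = a
      · exact ⟨b, Finset.mem_erase.2 ⟨by omega, hbV⟩, by omega, lt_of_le_of_ne hby
          (fun h => hne (by rw [hxa', h]))⟩
      · exact ⟨a, Finset.mem_erase.2 ⟨by omega, haV⟩, by omega, by omega⟩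
    · exact ⟨w, Finset.mem_erase.2 ⟨hwm, hwV⟩, hxw, hwy⟩
  · by_cases hum : u = m
    · subst hum
      rcases hu with hu | hu
      · exact ⟨a, Finset.mem_erase.2 ⟨by omega, haV⟩, Or.inl (by omega)⟩
      · exact ⟨b, Finset.mem_erase.2 ⟨by omega, hbV⟩, Or.inr (by omega)⟩
    · exact ⟨u, Finset.mem_erase.2 ⟨hum, huV⟩, hu⟩

lemma IsSide.of_erase (hT : ∀ d ∈ T, IsChord V d) (hab : (a, b) ∈ T)
    (hm : V.filter (fun v => a < v ∧ v < b) = {m})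
    (h : IsSide (V.erase m) (T.erase (a, b)) (x, y)) :
    IsSide V T (x, y) := by
  obtain ⟨haV, hbV, -⟩ := hT _ hab
  obtain ⟨-, ham, hmb⟩ := ear_apex_mem hm
  rcases h with h | ⟨hxV', hyV', hxy, hsucc⟩ | ⟨hxV, hyV, hxy, hlo, hhi⟩
  · exact Or.inl (Finset.mem_of_mem_erase h)
  · obtain ⟨hxm, hxV⟩ := Finset.mem_erase.1 hxV'
    obtain ⟨hym, hyV⟩ := Finset.mem_erase.1 hyV'
    by_cases hxy_ab : x = a ∧ y = b
    · obtain ⟨rfl, rfl⟩ := hxy_ab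
      exact Or.inl hab
    refine Or.inr (Or.inl ⟨hxV, hyV, hxy, fun v hv hxvy => ?_⟩)
    by_cases hvm : v = m
    · subst hvm
      have hxa : ¬ x < a := fun hxa => hsucc a (Finset.mem_erase.2 ⟨by omega, haV⟩) ⟨hxa, by omega⟩
      have hby : ¬ b < y := fun hby => hsucc b (Finset.mem_erase.2 ⟨by omega, hbV⟩) ⟨by omega, hby⟩
      have hax : ¬ a < x := fun hax => hxm (eq_ear_apex hm hxV hax (by omega))
      have hyb : ¬ y < b := fun hyb => hym (eq_ear_apex hm hyV (by omega) hyb)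
      exact hxy_ab ⟨by omega, by omega⟩
    · exact hsucc v (Finset.mem_erase.2 ⟨hvm, hv⟩) hxvy
  · refine Or.inr (Or.inr ⟨Finset.mem_of_mem_erase hxV, Finset.mem_of_mem_erase hyV, hxy,
      fun v hv hvx => ?_, fun v hv hyv => ?_⟩)
    · by_cases hvm : v = m
      · exact hlo a (Finset.mem_erase.2 ⟨by omega, haV⟩) (by omega)
      · exact hlo v (Finset.mem_erase.2 ⟨hvm, hv⟩) hvx
    · by_cases hvm : v = m
      · exact hhi b (Finset.mem_erase.2 ⟨by omega, hbV⟩) (by omega)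
      · exact hhi v (Finset.mem_erase.2 ⟨hvm, hv⟩) hyv

lemma IsTriangle.of_erase (hT : ∀ d ∈ T, IsChord V d) (hab : (a, b) ∈ T)
    (hm : V.filter (fun v => a < v ∧ v < b) = {m}) {t : ℕ × ℕ × ℕ}
    (ht : IsTriangle (V.erase m) (T.erase (a, b)) t) : IsTriangle V T t :=
  let ⟨h₁₂, h₂₃, s₁₂, s₂₃, s₁₃⟩ := ht
  ⟨h₁₂, h₂₃, s₁₂.of_erase hT hab hm, s₂₃.of_erase hT hab hm, s₁₃.of_erase hT hab hm⟩

lemma ShareTriangle.of_erase (hT : ∀ d ∈ T, IsChord V d) (hab : (a, b) ∈ T)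
    (hm : V.filter (fun v => a < v ∧ v < b) = {m}) {d e : ℕ × ℕ}
    (h : ShareTriangle (V.erase m) (T.erase (a, b)) d e) : ShareTriangle V T d e :=
  let ⟨t, ht, hd, he⟩ := h
  ⟨t, ht.of_erase hT hab hm, hd, he⟩

lemma isSuccEdge_erase_ear (hT : ∀ d ∈ T, IsChord V d) (hab : (a, b) ∈ T)
    (hm : V.filter (fun v => a < v ∧ v < b) = {m}) : IsSuccEdge (V.erase m) a b := by
  obtain ⟨haV, hbV, hab', -⟩ := hT _ hab
  obtain ⟨-, ham, hmb⟩ := ear_apex_mem hm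
  refine ⟨Finset.mem_erase.2 ⟨by omega, haV⟩, Finset.mem_erase.2 ⟨by omega, hbV⟩, hab',
    fun v hv havb => ?_⟩
  obtain ⟨hvm, hv⟩ := Finset.mem_erase.1 hv
  exact hvm (eq_ear_apex hm hv havb.1 havb.2)

lemma IsSide.erase (hT : ∀ d ∈ T, IsChord V d) (hab : (a, b) ∈ T)
    (hm : V.filter (fun v => a < v ∧ v < b) = {m}) (h : IsSide V T (x, y)) (hxm : x ≠ m)
    (hym : y ≠ m) : IsSide (V.erase m) (T.erase (a, b)) (x, y) := by
  have hxV := Finset.mem_erase.2 ⟨hxm, (h.mem hT).1⟩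
  have hyV := Finset.mem_erase.2 ⟨hym, (h.mem hT).2⟩
  rcases h with h | h | h
  · by_cases hxy_ab : (x, y) = (a, b)
    · obtain ⟨rfl, rfl⟩ := Prod.mk.inj hxy_ab
      exact Or.inr (Or.inl (isSuccEdge_erase_ear hT h hm))
    · exact Or.inl (Finset.mem_erase.2 ⟨hxy_ab, h⟩)
  · exact Or.inr (Or.inl (h.mono (Finset.erase_subset _ _) hxV hyV))
  · exact Or.inr (Or.inr (h.mono (Finset.erase_subset _ _) hxV hyV))

/-- Only the ear triangle has the apex as a vertex. -/
lemma ShareTriangle.erase (hT : ∀ d ∈ T, IsChord V d) (hnc : Noncrossing T) (hab : (a, b) ∈ T)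
    (hm : V.filter (fun v => a < v ∧ v < b) = {m}) {d e : ℕ × ℕ} (hd : d ∈ T.erase (a, b))
    (h : ShareTriangle V T d e) : ShareTriangle (V.erase m) (T.erase (a, b)) d e := by
  obtain ⟨⟨t₁, t₂, t₃⟩, ⟨h₁₂, h₂₃, s₁₂, s₂₃, s₁₃⟩, hsd, hse⟩ := h
  obtain ⟨hdab, hdT⟩ := Finset.mem_erase.1 hd
  have h₁ : t₁ ≠ m := by
    rintro rfl
    have := s₁₂.eq_ear_right hT hnc hab hm
    have := s₁₃.eq_ear_right hT hnc hab hm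
    omega
  have h₃ : t₃ ≠ m := by
    rintro rfl
    have := s₁₃.eq_ear_left hT hnc hab hm
    have := s₂₃.eq_ear_left hT hnc hab hm
    omega
  have h₂ : t₂ ≠ m := by
    rintro rfl
    obtain rfl := s₁₂.eq_ear_left hT hnc hab hm
    obtain rfl := s₂₃.eq_ear_right hT hnc hab hm
    have := ne_ear_apex hT hnc hab hm hdT
    rcases hsd with rfl | rfl | rfl
    exacts [this.2 rfl, this.1 rfl, hdab rfl]
  exact ⟨(t₁, t₂, t₃), ⟨h₁₂, h₂₃, s₁₂.erase hT hab hm h₁ h₂, s₂₃.erase hT hab hm h₂ h₃,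
    s₁₃.erase hT hab hm h₁ h₃⟩, hsd, hse⟩

lemma eq_of_shareTriangle_ear (hT : ∀ d ∈ T, IsChord V d) (hnc : Noncrossing T)
    (htf : TriangleFree T) (hab : (a, b) ∈ T) (hm : V.filter (fun v => a < v ∧ v < b) = {m})
    {e e' : ℕ × ℕ} (heT : e ∈ T) (he'T : e' ∈ T) (he : e ≠ (a, b)) (he' : e' ≠ (a, b))
    (s : ShareTriangle V T (a, b) e) (s' : ShareTriangle V T (a, b) e') : e = e' := by
  have outer : ∀ {t : ℕ × ℕ × ℕ} {f : ℕ × ℕ}, IsTriangle V T t → TriSide t f → f ∈ T →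
      f ≠ (a, b) → (a, b) ≠ (t.1, t.2.2) := by
    rintro ⟨t₁, t₂, t₃⟩ f ht hf hfT hfab hlong
    obtain ⟨rfl, rfl⟩ := Prod.mk.inj hlong
    obtain rfl := eq_ear_apex hm (ht.mem hT).2.1 ht.1 ht.2.1
    have := ne_ear_apex hT hnc hab hm hfT
    rcases hf with rfl | rfl | rfl
    exacts [this.2 rfl, this.1 rfl, hfab rfl]
  obtain ⟨t, ht, hd, hs⟩ := s
  obtain ⟨t', ht', hd', hs'⟩ := s'
  obtain rfl := ht.eq_of_triSide hT hnc ht' hd hd'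
    (iff_of_false (outer ht hs heT he) (outer ht' hs' he'T he'))
  obtain ⟨_, _, _⟩ := t
  exact eq_of_triSide_of_triangleFree htf ht.1 ht.2.1 hd hs hs' hab heT he'T he he'

lemma shareTriangle_ear_of_apex_inside (hT : ∀ d ∈ T, IsChord V d) (hab : (a, b) ∈ T)
    (hm : V.filter (fun v => a < v ∧ v < b) = {m}) {w : ℕ} (hxy : (x, y) ∈ T)
    (hne : (x, y) ≠ (a, b)) (hxm : x < m) (hmy : m < y)
    (hw : ∀ v ∈ V, v ≠ m → x < v → v < y → v = w) : ShareTriangle V T (a, b) (x, y) := by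
  obtain ⟨haV, hbV, -⟩ := hT _ hab
  obtain ⟨hxV, hyV, -⟩ := hT _ hxy
  obtain ⟨-, ham, hmb⟩ := ear_apex_mem hm
  have hxa : x ≤ a := by
    by_contra
    have := eq_ear_apex hm hxV (by omega) (by omega)
    omega
  have hby : b ≤ y := by
    by_contra
    have := eq_ear_apex hm hyV (by omega) (by omega)
    omega
  rcases eq_or_lt_of_le hxa with rfl | hxa
  · have hby : b < y := lt_of_le_of_ne hby (fun h => hne (by rw [h]))
    have hbw := hw b hbV (by omega) (by omega) hby
    have hsucc : IsSuccEdge V b y := ⟨hbV, hyV, hby, fun v hv hbvy => by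
      have := hw v hv (by omega) (by omega) hbvy.2
      omega⟩
    exact ⟨(x, b, y), ⟨(by omega : x < b), hby, Or.inl hab, Or.inr (Or.inl hsucc), Or.inl hxy⟩,
      Or.inl rfl, Or.inr (Or.inr rfl)⟩
  · have haw := hw a haV (by omega) hxa (by omega)
    obtain rfl : y = b := by
      by_contra
      have := hw b hbV (by omega) (by omega) (by omega)
      omega
    have hsucc : IsSuccEdge V x a := ⟨hxV, haV, hxa, fun v hv hxva => by
      have := hw v hv (by omega) hxva.1 (by omega)
      omega⟩
    exact ⟨(x, a, y), ⟨hxa, (by omega : a < y), Or.inr (Or.inl hsucc), Or.inl hab, Or.inl hxy⟩,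
      Or.inr (Or.inl rfl), Or.inr (Or.inr rfl)⟩

lemma shareTriangle_ear_of_apex_outside (hT : ∀ d ∈ T, IsChord V d) (hab : (a, b) ∈ T)
    (hm : V.filter (fun v => a < v ∧ v < b) = {m}) {w : ℕ} (hxy : (x, y) ∈ T)
    (hout : m < x ∨ y < m) (hw : ∀ v ∈ V, v ≠ m → (v < x ∨ y < v) → v = w) :
    ShareTriangle V T (a, b) (x, y) := by
  obtain ⟨haV, hbV, -⟩ := hT _ hab
  obtain ⟨hxV, hyV, hxy', -⟩ := hT _ hxy
  obtain ⟨-, ham, hmb⟩ := ear_apex_mem hm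
  rcases hout with hmx | hym
  · have haw := hw a haV (by omega) (Or.inl (by omega))
    obtain rfl : b = x := by
      have : ¬ (b < x ∨ y < b) := fun h => by have := hw b hbV (by omega) h; omega
      by_contra
      have := eq_ear_apex hm hxV (by omega) (by omega)
      omega
    have hwrap : IsWrapEdge V a y := ⟨haV, hyV, by omega,
      fun v hv hva => by have := hw v hv (by omega) (Or.inl (by omega)); omega,
      fun v hv hyv => by have := hw v hv (by omega) (Or.inr hyv); omega⟩
    exact ⟨(a, b, y), ⟨(by omega : a < b), hxy', Or.inl hab, Or.inl hxy, Or.inr (Or.inr hwrap)⟩,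
      Or.inl rfl, Or.inr (Or.inl rfl)⟩
  · have hbw := hw b hbV (by omega) (Or.inr (by omega))
    obtain rfl : a = y := by
      have : ¬ (a < x ∨ y < a) := fun h => by have := hw a haV (by omega) h; omega
      by_contra
      have := eq_ear_apex hm hyV (by omega) (by omega)
      omega
    have hwrap : IsWrapEdge V x b := ⟨hxV, hbV, by omega,
      fun v hv hvx => by have := hw v hv (by omega) (Or.inl hvx); omega,
      fun v hv hbv => by have := hw v hv (by omega) (Or.inr (by omega)); omega⟩
    exact ⟨(x, a, b), ⟨hxy', (by omega : a < b), Or.inl hxy, Or.inl hab, Or.inr (Or.inr hwrap)⟩,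
      Or.inr (Or.inl rfl), Or.inl rfl⟩

lemma exists_erase_eq_singleton {s : Finset ℕ} (h : (s.erase m).card = 1) (hs : s.card ≠ 1) :
    m ∈ s ∧ ∃ w, s.erase m = {w} := by
  refine ⟨?_, Finset.card_eq_one.1 h⟩
  by_contra hm
  rw [Finset.erase_eq_of_notMem hm] at h
  exact hs h

/-- Removing the apex changes only the side of `e` containing it, so `e` became short by losing
`m` from a side with two vertices; such a chord borders the ear. -/
lemma shareTriangle_ear_of_isShortChord_erase (hT : ∀ d ∈ T, IsChord V d) (hnc : Noncrossing T)
    (hab : (a, b) ∈ T) (hm : V.filter (fun v => a < v ∧ v < b) = {m}) {e : ℕ × ℕ}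
    (he : e ∈ T.erase (a, b)) (hshort' : IsShortChord (V.erase m) e)
    (hshort : ¬ IsShortChord V e) : ShareTriangle V T (a, b) e := by
  obtain ⟨hne, heT⟩ := Finset.mem_erase.1 he
  obtain ⟨x, y⟩ := e
  obtain ⟨hxm, hym⟩ := ne_ear_apex hT hnc hab hm heT
  simp only [IsShortChord, Finset.filter_erase, not_or] at hshort hshort'
  have hsingleton : ∀ {s : Finset ℕ} {w}, s.erase m = {w} → ∀ v ∈ s, v ≠ m → v = w :=
    fun hs v hv hvm => Finset.mem_singleton.1 (hs ▸ Finset.mem_erase.2 ⟨hvm, hv⟩)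
  rcases hshort' with h | h
  · obtain ⟨hmem, w, hw⟩ := exists_erase_eq_singleton h hshort.1
    obtain ⟨-, hxm, hmy⟩ := Finset.mem_filter.1 hmem
    exact shareTriangle_ear_of_apex_inside hT hab hm heT hne hxm hmy
      fun v hv hvm hxv hvy => hsingleton hw v (Finset.mem_filter.2 ⟨hv, hxv, hvy⟩) hvm
  · obtain ⟨hmem, w, hw⟩ := exists_erase_eq_singleton h hshort.2
    obtain ⟨-, hout⟩ := Finset.mem_filter.1 hmem
    exact shareTriangle_ear_of_apex_outside hT hab hm heT hout
      fun v hv hvm hvout => hsingleton hw v (Finset.mem_filter.2 ⟨hv, hvout⟩) hvm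

end Ear

section Counting

variable {V : Finset ℕ} {T : Finset (ℕ × ℕ)} {a b : ℕ}

lemma isChord_inside {e : ℕ × ℕ} (hab : IsChord V (a, b)) (he : IsChord V e) (hae : a ≤ e.1)
    (heb : e.2 ≤ b) (hne : e ≠ (a, b)) : IsChord (V.filter (fun v => a ≤ v ∧ v ≤ b)) e := by
  obtain ⟨haV, hbV, -⟩ := hab
  obtain ⟨h₁, h₂, h₁₂, ⟨w, hwV, hw⟩, -⟩ := he
  have hne' : e.1 ≠ a ∨ e.2 ≠ b := by
    by_contra! h
    exact hne (Prod.ext h.1 h.2)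
  refine ⟨Finset.mem_filter.2 ⟨h₁, by omega⟩, Finset.mem_filter.2 ⟨h₂, by omega⟩, h₁₂,
    ⟨w, Finset.mem_filter.2 ⟨hwV, by omega⟩, hw⟩, ?_⟩
  rcases hne' with h | h
  · exact ⟨a, Finset.mem_filter.2 ⟨haV, by omega⟩, by omega⟩
  · exact ⟨b, Finset.mem_filter.2 ⟨hbV, by omega⟩, by omega⟩

lemma isChord_outside {e : ℕ × ℕ} (hab : IsChord V (a, b)) (he : IsChord V e)
    (hcross : ¬ Cross e (a, b)) (hin : ¬ (a ≤ e.1 ∧ e.2 ≤ b))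
    (hne : e ≠ (a, b)) : IsChord (V.filter (fun v => v ≤ a ∨ b ≤ v)) e := by
  obtain ⟨haV, hbV, hab', -⟩ := hab
  obtain ⟨h₁, h₂, h₁₂, ⟨w, hwV, hw⟩, ⟨u, huV, hu⟩⟩ := he
  have hne' : e.1 ≠ a ∨ e.2 ≠ b := by
    by_contra! h
    exact hne (Prod.ext h.1 h.2)
  have hpos : e.2 ≤ a ∨ b ≤ e.1 ∨ (e.1 ≤ a ∧ b ≤ e.2) := by
    unfold Cross at hcross
    omega
  refine ⟨Finset.mem_filter.2 ⟨h₁, by omega⟩, Finset.mem_filter.2 ⟨h₂, by omega⟩, h₁₂, ?_, ?_⟩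
  · by_cases hw' : w ≤ a ∨ b ≤ w
    · exact ⟨w, Finset.mem_filter.2 ⟨hwV, hw'⟩, hw⟩
    · by_cases hea : e.1 < a
      · exact ⟨a, Finset.mem_filter.2 ⟨haV, by omega⟩, by omega⟩
      · exact ⟨b, Finset.mem_filter.2 ⟨hbV, by omega⟩, by omega⟩
  · rcases hpos with h | h | h
    · exact ⟨b, Finset.mem_filter.2 ⟨hbV, by omega⟩, by omega⟩
    · exact ⟨a, Finset.mem_filter.2 ⟨haV, by omega⟩, by omega⟩
    · exact ⟨u, Finset.mem_filter.2 ⟨huV, by omega⟩, by omega⟩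

lemma card_inside_add_card_outside (haV : a ∈ V) (hbV : b ∈ V) (hab : a < b) :
    (V.filter (fun v => a ≤ v ∧ v ≤ b)).card + (V.filter (fun v => v ≤ a ∨ b ≤ v)).card =
      V.card + 2 := by
  have hunion : V.filter (fun v => a ≤ v ∧ v ≤ b) ∪ V.filter (fun v => v ≤ a ∨ b ≤ v) = V := by
    ext v
    simp only [Finset.mem_union, Finset.mem_filter, ← and_or_left]
    exact ⟨fun h => h.1, fun h => ⟨h, by omega⟩⟩
  have hinter : V.filter (fun v => a ≤ v ∧ v ≤ b) ∩ V.filter (fun v => v ≤ a ∨ b ≤ v) = {a, b} := by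
    ext v
    simp only [Finset.mem_inter, Finset.mem_filter, Finset.mem_insert, Finset.mem_singleton]
    constructor
    · rintro ⟨⟨-, h₁⟩, -, h₂⟩
      omega
    · rintro (rfl | rfl)
      exacts [⟨⟨haV, by omega⟩, haV, by omega⟩, ⟨⟨hbV, by omega⟩, hbV, by omega⟩]
  rw [← Finset.card_union_add_card_inter, hunion, hinter, Finset.card_pair hab.ne]

lemma three_le_card_of_lt {x y z : ℕ} {s : Finset ℕ} (hx : x ∈ s) (hy : y ∈ s) (hz : z ∈ s)
    (hxy : x < y) (hyz : y < z) : 3 ≤ s.card := by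
  have : ({x, y, z} : Finset ℕ).card = 3 :=
    Finset.card_eq_three.2 ⟨x, y, z, hxy.ne, (hxy.trans hyz).ne, hyz.ne, rfl⟩
  rw [← this]
  exact Finset.card_le_card (by simp [Finset.insert_subset_iff, hx, hy, hz])

/-- A chord splits the polygon into two polygons that share its endpoints, and every other chord
lies in one of them. -/
theorem card_le_of_noncrossing {S : Finset (ℕ × ℕ)} (hS : ∀ d ∈ S, IsChord V d)
    (hnc : Noncrossing S) : S.card ≤ V.card - 3 := by
  induction S using Finset.strongInduction generalizing V with
  | _ S ih =>
  rcases S.eq_empty_or_nonempty with rfl | ⟨⟨a, b⟩, hab⟩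
  · simp
  have habV := hS _ hab
  obtain ⟨haV, hbV, hab', ⟨w, hwV, hw⟩, ⟨u, huV, hu⟩⟩ := hS _ hab
  set S₁ := S.filter (fun e => a ≤ e.1 ∧ e.2 ≤ b ∧ e ≠ (a, b))
  set S₂ := S.filter (fun e => e ≠ (a, b) ∧ ¬(a ≤ e.1 ∧ e.2 ≤ b))
  have hS₁ : S₁.card ≤ (V.filter (fun v => a ≤ v ∧ v ≤ b)).card - 3 := by
    refine ih S₁ ⟨Finset.filter_subset _ _, fun h => by simpa [S₁] using h hab⟩ (fun e he => ?_)
      (fun d hd e he => hnc d (Finset.mem_of_mem_filter d hd) e (Finset.mem_of_mem_filter e he))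
    obtain ⟨he, hae, heb, hne⟩ := Finset.mem_filter.1 he
    exact isChord_inside habV (hS e he) hae heb hne
  have hS₂ : S₂.card ≤ (V.filter (fun v => v ≤ a ∨ b ≤ v)).card - 3 := by
    refine ih S₂ ⟨Finset.filter_subset _ _, fun h => by simpa [S₂] using h hab⟩ (fun e he => ?_)
      (fun d hd e he => hnc d (Finset.mem_of_mem_filter d hd) e (Finset.mem_of_mem_filter e he))
    obtain ⟨he, hne, hin⟩ := Finset.mem_filter.1 he
    exact isChord_outside habV (hS e he) (hnc _ he _ hab) hin hne
  have hsplit : S₁.card + S₂.card + 1 = S.card := by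
    rw [← Finset.card_union_of_disjoint
      (Finset.disjoint_filter.2 fun e _ h₁ h₂ => h₂.2 ⟨h₁.1, h₁.2.1⟩)]
    rw [← Finset.card_erase_add_one hab]
    congr 1
    congr 1
    ext e
    simp only [Finset.mem_union, Finset.mem_filter, Finset.mem_erase]
    tauto
  have h₁ : 3 ≤ (V.filter (fun v => a ≤ v ∧ v ≤ b)).card :=
    three_le_card_of_lt (Finset.mem_filter.2 ⟨haV, by omega⟩) (Finset.mem_filter.2 ⟨hwV, by omega⟩)
      (Finset.mem_filter.2 ⟨hbV, by omega⟩) hw.1 hw.2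
  have h₂ : 3 ≤ (V.filter (fun v => v ≤ a ∨ b ≤ v)).card := by
    rcases hu with hu | hu
    · exact three_le_card_of_lt (Finset.mem_filter.2 ⟨huV, by omega⟩)
        (Finset.mem_filter.2 ⟨haV, by omega⟩) (Finset.mem_filter.2 ⟨hbV, by omega⟩) hu hab'
    · exact three_le_card_of_lt (Finset.mem_filter.2 ⟨haV, by omega⟩)
        (Finset.mem_filter.2 ⟨hbV, by omega⟩) (Finset.mem_filter.2 ⟨huV, by omega⟩) hab' hu
  have := card_inside_add_card_outside (a := a) (b := b) haV hbV hab'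
  omega

/-- By noncrossing, a chord ending strictly inside `(a, b)` would lie under it and have fewer
inner vertices. -/
lemma not_lt_lt_of_minimal (hT : ∀ d ∈ T, IsChord V d) (hnc : Noncrossing T) (hab : (a, b) ∈ T)
    (hmin : ∀ e ∈ T, (V.filter (fun v => a < v ∧ v < b)).card ≤
      (V.filter (fun v => e.1 < v ∧ v < e.2)).card) {e : ℕ × ℕ} (he : e ∈ T) :
    ¬ (a < e.1 ∧ e.1 < b) ∧ ¬ (a < e.2 ∧ e.2 < b) := by
  have inside : a ≤ e.1 → e.2 ≤ b → e = (a, b) := by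
    intro hae heb
    by_contra hne
    obtain ⟨h₁, h₂, h₁₂, -⟩ := hT _ he
    have hssub : V.filter (fun v => e.1 < v ∧ v < e.2) ⊂ V.filter (fun v => a < v ∧ v < b) := by
      refine Finset.ssubset_iff_subset_ne.2 ⟨fun v hv => ?_, fun heq => ?_⟩
      · rw [Finset.mem_filter] at hv ⊢
        exact ⟨hv.1, by omega, by omega⟩
      have hne' : e.1 ≠ a ∨ e.2 ≠ b := by
        by_contra! h
        exact hne (Prod.ext h.1 h.2)
      rcases hne' with h | h
      · have : e.1 ∈ V.filter (fun v => a < v ∧ v < b) := Finset.mem_filter.2 ⟨h₁, by omega⟩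
        have := Finset.mem_filter.1 (heq ▸ this)
        omega
      · have : e.2 ∈ V.filter (fun v => a < v ∧ v < b) := Finset.mem_filter.2 ⟨h₂, by omega⟩
        have := Finset.mem_filter.1 (heq ▸ this)
        omega
    exact absurd (hmin e he) (not_le.2 (Finset.card_lt_card hssub))
  have hcross := hnc _ hab _ he
  have hlt := (hT _ he).2.2.1
  unfold Cross at hcross
  constructor
  · rintro ⟨h₁, h₂⟩
    by_cases heb : e.2 ≤ b
    · have := inside h₁.le heb
      simp only [Prod.ext_iff] at this
      omega
    · exact hcross (Or.inl ⟨h₁, h₂, by omega⟩)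
  · rintro ⟨h₁, h₂⟩
    by_cases hae : a ≤ e.1
    · have := inside hae h₂.le
      simp only [Prod.ext_iff] at this
      omega
    · exact hcross (Or.inr ⟨by omega, h₁, h₂⟩)

theorem exists_ear (hV : 4 ≤ V.card) (hcard : T.card = V.card - 3)
    (hT : ∀ d ∈ T, IsChord V d) (hnc : Noncrossing T) :
    ∃ a b m, (a, b) ∈ T ∧ V.filter (fun v => a < v ∧ v < b) = {m} := by
  obtain ⟨⟨a, b⟩, hab, hmin⟩ := T.exists_min_image
    (fun d => (V.filter (fun v => d.1 < v ∧ v < d.2)).card) (by rw [← Finset.card_pos]; omega)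
  obtain ⟨haV, hbV, -, ⟨w, hwV, hw⟩, -⟩ := hT _ hab
  dsimp only at hmin haV hbV hw
  by_cases hone : (V.filter (fun v => a < v ∧ v < b)).card = 1
  · obtain ⟨m, hm⟩ := Finset.card_eq_one.1 hone
    exact ⟨a, b, m, hab, hm⟩
  exfalso
  obtain ⟨p, hp, q, hq, hpq⟩ := Finset.one_lt_card.1 (lt_of_le_of_ne
    (Finset.card_pos.2 ⟨w, Finset.mem_filter.2 ⟨hwV, hw⟩⟩) (Ne.symm hone))
  wlog hlt : p < q generalizing p q
  · exact this q hq p hp (Ne.symm hpq) (by omega)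
  obtain ⟨hpV, hap, hpb⟩ := Finset.mem_filter.1 hp
  obtain ⟨hqV, haq, hqb⟩ := Finset.mem_filter.1 hq
  have hno := fun e he => not_lt_lt_of_minimal hT hnc hab hmin (e := e) he
  have hnew : (a, q) ∉ T := fun h => (hno _ h).2 ⟨haq, hqb⟩
  have hchords : ∀ d ∈ insert (a, q) T, IsChord V d := by
    intro d hd
    rcases Finset.mem_insert.1 hd with rfl | hd
    · exact ⟨haV, hqV, haq, ⟨p, hpV, hap, hlt⟩, ⟨b, hbV, Or.inr hqb⟩⟩
    · exact hT _ hd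
  have hnc' : Noncrossing (insert (a, q) T) := by
    intro d hd e he
    rcases Finset.mem_insert.1 hd with rfl | hd <;> rcases Finset.mem_insert.1 he with rfl | he
    · unfold Cross; omega
    · have := hno _ he
      unfold Cross; omega
    · have := hno _ hd
      unfold Cross; omega
    · exact hnc _ hd _ he
  have := card_le_of_noncrossing hchords hnc'
  rw [Finset.card_insert_of_notMem hnew] at this
  omega

end Counting

lemma card_inner_add_card_outer {V : Finset ℕ} {x y : ℕ} (hx : x ∈ V) (hy : y ∈ V) (hxy : x < y) :
    (V.filter (fun v => x < v ∧ v < y)).card + (V.filter (fun v => v < x ∨ y < v)).card + 2 =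
      V.card := by
  have hrest : V.filter (fun v => ¬ (x < v ∧ v < y)) =
      V.filter (fun v => v < x ∨ y < v) ∪ {x, y} := by
    ext v
    simp only [Finset.mem_filter, Finset.mem_union, Finset.mem_insert, Finset.mem_singleton]
    constructor
    · rintro ⟨hv, h⟩
      by_cases hout : v < x ∨ y < v
      · exact Or.inl ⟨hv, hout⟩
      · omega
    · rintro (⟨hv, h⟩ | rfl | rfl)
      exacts [⟨hv, by omega⟩, ⟨hx, by omega⟩, ⟨hy, by omega⟩]
  have hdisj : Disjoint (V.filter (fun v => v < x ∨ y < v)) {x, y} := by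
    simp only [Finset.disjoint_insert_right, Finset.disjoint_singleton_right, Finset.mem_filter]
    omega
  have := Finset.card_filter_add_card_filter_not (s := V) (fun v => x < v ∧ v < y)
  rw [hrest, Finset.card_union_of_disjoint hdisj, Finset.card_pair hxy.ne] at this
  omega

lemma isShortChord_of_card_eq_five {V : Finset ℕ} {e : ℕ × ℕ} (hV : V.card = 5)
    (he : IsChord V e) : IsShortChord V e := by
  obtain ⟨hxV, hyV, hxy, ⟨w, hwV, hw⟩, ⟨u, huV, hu⟩⟩ := he
  have := card_inner_add_card_outer hxV hyV hxy
  have : 0 < (V.filter (fun v => e.1 < v ∧ v < e.2)).card :=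
    Finset.card_pos.2 ⟨w, Finset.mem_filter.2 ⟨hwV, hw⟩⟩
  have : 0 < (V.filter (fun v => v < e.1 ∨ e.2 < v)).card :=
    Finset.card_pos.2 ⟨u, Finset.mem_filter.2 ⟨huV, hu⟩⟩
  unfold IsShortChord
  omega

section Lists

variable {α : Type*}

lemma mem_head?_or_mem_getLast? {R : α → α → Prop} {L : List α} (hL : L.Nodup)
    (hc : L.IsChain R) {x : α} (hx : x ∈ L)
    (hdeg : ∀ y z, y ∈ L → z ∈ L → y ≠ z → y ≠ x → z ≠ x → R y x → R x z → False) :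
    x ∈ L.head? ∨ x ∈ L.getLast? := by
  obtain ⟨i, hi, rfl⟩ := List.getElem_of_mem hx
  rw [List.head?_eq_getElem?, List.getLast?_eq_getElem?]
  by_cases h₀ : i = 0
  · subst h₀
    exact Or.inl (List.getElem?_eq_getElem hi)
  by_cases hlast : i = L.length - 1
  · subst hlast
    exact Or.inr (List.getElem?_eq_getElem hi)
  exfalso
  have hchain := List.isChain_iff_getElem.1 hc
  have hprev := hchain (i - 1) (by omega)
  simp only [Nat.sub_add_cancel (Nat.pos_of_ne_zero h₀)] at hprev
  refine hdeg L[i - 1] L[i + 1] (List.getElem_mem _) (List.getElem_mem _) ?_ ?_ ?_ hprev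
    (hchain i (by omega))
  all_goals
    rw [Ne, hL.getElem_inj_iff]
    omega

lemma length_eq_one_of_mem_head?_of_mem_getLast? {L : List α} (hL : L.Nodup) {x : α}
    (hhead : x ∈ L.head?) (hlast : x ∈ L.getLast?) : L.length = 1 := by
  rcases L with _ | ⟨y, _ | ⟨z, l⟩⟩
  · simp at hhead
  · rfl
  · obtain rfl : y = x := by simpa using hhead
    rw [List.getLast?_cons_cons] at hlast
    exact absurd (List.mem_of_mem_getLast? hlast) (List.nodup_cons.1 hL).1

end Lists

/-- The chords of `T` listed along the dual path of the triangulation. The last field is what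
locates the chord next to a new ear. -/
structure IsChordPath (V : Finset ℕ) (T : Finset (ℕ × ℕ)) (L : List (ℕ × ℕ)) : Prop where
  nodup : L.Nodup
  mem_iff : ∀ d, d ∈ L ↔ d ∈ T
  isChain : L.IsChain (ShareTriangle V T)
  not_shareTriangle : ∀ i j (hi : i < L.length) (hj : j < L.length), i + 1 < j →
    ¬ ShareTriangle V T L[i] L[j]
  head_short : ∀ d ∈ L.head?, IsShortChord V d
  getLast_short : ∀ d ∈ L.getLast?, IsShortChord V d
  boundary_mem_triangle : ∀ x y, IsSuccEdge V x y ∨ IsWrapEdge V x y →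
    ∃ t, IsTriangle V T t ∧ TriSide t (x, y)

namespace IsChordPath

variable {V : Finset ℕ} {T : Finset (ℕ × ℕ)} {L : List (ℕ × ℕ)}

lemma length_eq_card (hL : IsChordPath V T L) : L.length = T.card := by
  rw [← List.toFinset_card_of_nodup hL.nodup]
  congr 1
  ext d
  rw [List.mem_toFinset, hL.mem_iff]

lemma reverse (hL : IsChordPath V T L) : IsChordPath V T L.reverse where
  nodup := List.nodup_reverse.2 hL.nodup
  mem_iff d := by rw [List.mem_reverse, hL.mem_iff]
  isChain := List.isChain_reverse.2 (hL.isChain.imp fun _ _ h => h.symm)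
  not_shareTriangle i j hi hj hij h := by
    rw [List.length_reverse] at hi hj
    rw [List.getElem_reverse, List.getElem_reverse] at h
    exact hL.not_shareTriangle _ _ _ _ (by omega) h.symm
  head_short := by
    rw [List.head?_reverse]
    exact hL.getLast_short
  getLast_short := by
    rw [List.getLast?_reverse]
    exact hL.head_short
  boundary_mem_triangle := hL.boundary_mem_triangle

lemma shareTriangle_getElem_iff (hL : IsChordPath V T L) {i j : ℕ} (hi : i < L.length)
    (hj : j < L.length) (hij : i ≠ j) : ShareTriangle V T L[i] L[j] ↔ j = i + 1 ∨ i = j + 1 := by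
  constructor
  · intro h
    by_contra hfar
    rcases lt_or_gt_of_ne hij with hlt | hlt
    · exact hL.not_shareTriangle i j hi hj (by omega) h
    · exact hL.not_shareTriangle j i hj hi (by omega) h.symm
  · have hchain := List.isChain_iff_getElem.1 hL.isChain
    rintro (rfl | rfl)
    exacts [hchain i hj, (hchain j hi).symm]

end IsChordPath

lemma isTriangle_of_forall_eq {V : Finset ℕ} {T : Finset (ℕ × ℕ)} {p q r : ℕ} (hp : p ∈ V)
    (hq : q ∈ V) (hr : r ∈ V) (hpq : p < q) (hqr : q < r)
    (hV : ∀ v ∈ V, v = p ∨ v = q ∨ v = r) : IsTriangle V T (p, q, r) := by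
  have hsucc₁ : IsSuccEdge V p q :=
    ⟨hp, hq, hpq, fun v hv => by rcases hV v hv with rfl | rfl | rfl <;> omega⟩
  have hsucc₂ : IsSuccEdge V q r :=
    ⟨hq, hr, hqr, fun v hv => by rcases hV v hv with rfl | rfl | rfl <;> omega⟩
  have hwrap : IsWrapEdge V p r := ⟨hp, hr, hpq.trans hqr,
    fun v hv => by rcases hV v hv with rfl | rfl | rfl <;> omega,
    fun v hv => by rcases hV v hv with rfl | rfl | rfl <;> omega⟩
  exact ⟨hpq, hqr, Or.inr (Or.inl hsucc₁), Or.inr (Or.inl hsucc₂), Or.inr (Or.inr hwrap)⟩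

lemma isChordPath_nil {V : Finset ℕ} (hV : V.card = 3) : IsChordPath V ∅ [] where
  nodup := List.nodup_nil
  mem_iff := by simp
  isChain := List.isChain_nil
  not_shareTriangle := by simp
  head_short := by simp
  getLast_short := by simp
  boundary_mem_triangle x y hxy := by
    obtain ⟨hx, hy, hxy⟩ : x ∈ V ∧ y ∈ V ∧ x < y := by
      rcases hxy with h | h
      exacts [⟨h.1, h.2.1, h.2.2.1⟩, ⟨h.1, h.2.1, h.2.2.1⟩]
    obtain ⟨z, hz, hzx, hzy⟩ : ∃ z ∈ V, z ≠ x ∧ z ≠ y := by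
      have : 0 < ((V.erase x).erase y).card := by
        rw [Finset.card_erase_of_mem (Finset.mem_erase.2 ⟨hxy.ne', hy⟩),
          Finset.card_erase_of_mem hx]
        omega
      obtain ⟨z, hz⟩ := Finset.card_pos.1 this
      simp only [Finset.mem_erase] at hz
      exact ⟨z, hz.2.2, hz.2.1, hz.1⟩
    have hV' : ∀ v ∈ V, v = x ∨ v = y ∨ v = z := by
      have hsub : ({x, y, z} : Finset ℕ) ⊆ V := by
        simp [Finset.insert_subset_iff, hx, hy, hz]
      have heq := Finset.eq_of_subset_of_card_le hsub (by
        rw [hV, Finset.card_eq_three.2 ⟨x, y, z, hxy.ne, hzx.symm, hzy.symm, rfl⟩])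
      intro v hv
      simpa [← heq] using hv
    rcases lt_trichotomy z x with hzx' | rfl | hxz
    · exact ⟨(z, x, y), isTriangle_of_forall_eq hz hx hy hzx' hxy (by grind), Or.inr (Or.inl rfl)⟩
    · exact absurd rfl hzx
    · rcases lt_trichotomy z y with hzy' | rfl | hyz
      · exact ⟨(x, z, y), isTriangle_of_forall_eq hx hz hy hxz hzy' (by grind),
          Or.inr (Or.inr rfl)⟩
      · exact absurd rfl hzy
      · exact ⟨(x, y, z), isTriangle_of_forall_eq hx hy hz hxy hyz hV', Or.inl rfl⟩

lemma exists_mem_triSide {V : Finset ℕ} {T : Finset (ℕ × ℕ)} {t : ℕ × ℕ × ℕ}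
    (hV : 4 ≤ V.card) (ht : IsTriangle V T t) : ∃ e ∈ T, TriSide t e := by
  obtain ⟨p, q, r⟩ := t
  obtain ⟨hpq, hqr, s₁, s₂, s₃⟩ := ht
  dsimp only at hpq hqr s₁ s₂ s₃
  by_contra! hnone
  have boundary : ∀ {x y : ℕ}, IsSide V T (x, y) → TriSide (p, q, r) (x, y) →
      IsSuccEdge V x y ∨ IsWrapEdge V x y :=
    fun h hside => h.resolve_left fun hT => hnone _ hT hside
  rcases boundary s₁ (Or.inl rfl) with h₁ | h₁ <;>
    rcases boundary s₂ (Or.inr (Or.inl rfl)) with h₂ | h₂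
  · rcases boundary s₃ (Or.inr (Or.inr rfl)) with h₃ | h₃
    · exact h₃.2.2.2 q h₁.2.1 ⟨hpq, hqr⟩
    · have hsub : V ⊆ {p, q, r} := by
        intro v hv
        have := h₁.2.2.2 v hv
        have := h₂.2.2.2 v hv
        have := h₃.2.2.2.1 v hv
        have := h₃.2.2.2.2 v hv
        simp only [Finset.mem_insert, Finset.mem_singleton]
        omega
      have := (Finset.card_le_card hsub).trans Finset.card_le_three
      omega
  · exact h₂.2.2.2.1 p h₁.1 hpq
  · exact h₁.2.2.2.2 r h₂.2.1 hqr
  · exact h₁.2.2.2.2 r h₂.2.1 hqr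

section Induction

variable {V : Finset ℕ} {T : Finset (ℕ × ℕ)} {L : List (ℕ × ℕ)} {a b m : ℕ}

lemma isShortChord_ear (hm : V.filter (fun v => a < v ∧ v < b) = {m}) :
    IsShortChord V (a, b) :=
  Or.inl (by rw [show V.filter (fun v => (a, b).1 < v ∧ v < (a, b).2) = {m} from hm,
    Finset.card_singleton])

lemma boundary_mem_triangle_of_erase (hT : ∀ d ∈ T, IsChord V d) (hnc : Noncrossing T)
    (hab : (a, b) ∈ T) (hm : V.filter (fun v => a < v ∧ v < b) = {m})
    (h : ∀ x y, IsSuccEdge (V.erase m) x y ∨ IsWrapEdge (V.erase m) x y →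
      ∃ t, IsTriangle (V.erase m) (T.erase (a, b)) t ∧ TriSide t (x, y))
    (x y : ℕ) (hxy : IsSuccEdge V x y ∨ IsWrapEdge V x y) :
    ∃ t, IsTriangle V T t ∧ TriSide t (x, y) := by
  have hside : IsSide V T (x, y) := Or.inr hxy
  by_cases hym : y = m
  · subst hym
    exact ⟨_, isTriangle_ear hT hab hm, Or.inl (by rw [hside.eq_ear_left hT hnc hab hm])⟩
  by_cases hxm : x = m
  · subst hxm
    exact ⟨_, isTriangle_ear hT hab hm, Or.inr (Or.inl (by rw [hside.eq_ear_right hT hnc hab hm]))⟩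
  have hx := Finset.mem_erase.2 ⟨hxm, (hside.mem hT).1⟩
  have hy := Finset.mem_erase.2 ⟨hym, (hside.mem hT).2⟩
  obtain ⟨t, ht, hxy_t⟩ := h x y (hxy.imp (·.mono (Finset.erase_subset _ _) hx hy)
    (·.mono (Finset.erase_subset _ _) hx hy))
  exact ⟨t, ht.of_erase hT hab hm, hxy_t⟩

/-- A last chord that stops being short borders the ear, so it is also the head, and then the
polygon is a pentagon, where every chord is short. -/
lemma getLast_short_cons (hT : ∀ d ∈ T, IsChord V d) (hnc : Noncrossing T) (htf : TriangleFree T)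
    (hcard : V.card = T.card + 3) (hab : (a, b) ∈ T) (hm : V.filter (fun v => a < v ∧ v < b) = {m})
    (hL : IsChordPath (V.erase m) (T.erase (a, b)) L)
    (hhead : ∀ e ∈ L.head?, ShareTriangle V T (a, b) e) :
    ∀ d ∈ ((a, b) :: L).getLast?, IsShortChord V d := by
  intro d hd
  rw [List.getLast?_cons, Option.mem_some_iff] at hd
  cases hlast : L.getLast? with
  | none =>
    rw [hlast] at hd
    exact hd ▸ isShortChord_ear hm
  | some e =>
    rw [hlast] at hd
    subst hd
    have he : e ∈ T.erase (a, b) := (hL.mem_iff e).1 (List.mem_of_mem_getLast? hlast)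
    by_contra hshort
    have hs := shareTriangle_ear_of_isShortChord_erase hT hnc hab hm he
      (hL.getLast_short e hlast) hshort
    obtain ⟨e₀, he₀⟩ : ∃ e₀, e₀ ∈ L.head? := by
      cases hhd : L.head? with
      | none => simp_all
      | some e₀ => exact ⟨e₀, rfl⟩
    have he₀T := (hL.mem_iff e₀).1 (List.mem_of_mem_head? he₀)
    obtain rfl := eq_of_shareTriangle_ear hT hnc htf hab hm (Finset.mem_of_mem_erase he)
      (Finset.mem_of_mem_erase he₀T) (Finset.ne_of_mem_erase he) (Finset.ne_of_mem_erase he₀T)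
      hs (hhead e₀ he₀)
    have hlen := length_eq_one_of_mem_head?_of_mem_getLast? hL.nodup he₀ hlast
    rw [hL.length_eq_card, Finset.card_erase_of_mem hab] at hlen
    exact hshort (isShortChord_of_card_eq_five (by omega)
      (hT _ (Finset.mem_of_mem_erase he)))

lemma IsChordPath.cons (hT : ∀ d ∈ T, IsChord V d) (hnc : Noncrossing T) (htf : TriangleFree T)
    (hcard : V.card = T.card + 3) (hab : (a, b) ∈ T) (hm : V.filter (fun v => a < v ∧ v < b) = {m})
    (hL : IsChordPath (V.erase m) (T.erase (a, b)) L)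
    (hhead : ∀ e ∈ L.head?, ShareTriangle V T (a, b) e) : IsChordPath V T ((a, b) :: L) where
  nodup := List.nodup_cons.2 ⟨fun h => Finset.ne_of_mem_erase ((hL.mem_iff _).1 h) rfl, hL.nodup⟩
  mem_iff d := by
    rw [List.mem_cons, hL.mem_iff, Finset.mem_erase]
    constructor
    · rintro (rfl | ⟨-, hd⟩)
      exacts [hab, hd]
    · intro hd
      by_cases h : d = (a, b)
      exacts [Or.inl h, Or.inr ⟨h, hd⟩]
  isChain := List.isChain_cons.2 ⟨hhead, hL.isChain.imp fun _ _ h => h.of_erase hT hab hm⟩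
  not_shareTriangle i j hi hj hij h := by
    obtain ⟨j, rfl⟩ : ∃ j', j = j' + 1 := ⟨j - 1, by omega⟩
    simp only [List.length_cons] at hi hj
    simp only [List.getElem_cons_succ] at h
    have hjT := (hL.mem_iff _).1 (List.getElem_mem (l := L) (by omega : j < L.length))
    rcases i with _ | i
    · have h₀T := (hL.mem_iff _).1 (List.getElem_mem (l := L) (by omega : 0 < L.length))
      have := eq_of_shareTriangle_ear hT hnc htf hab hm (Finset.mem_of_mem_erase hjT)
        (Finset.mem_of_mem_erase h₀T) (Finset.ne_of_mem_erase hjT) (Finset.ne_of_mem_erase h₀T)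
        h (hhead _ (by rw [List.head?_eq_getElem?]; exact List.getElem?_eq_getElem _))
      rw [hL.nodup.getElem_inj_iff] at this
      omega
    · simp only [List.getElem_cons_succ] at h
      have hiT := (hL.mem_iff _).1 (List.getElem_mem (l := L) (by omega : i < L.length))
      exact hL.not_shareTriangle i j _ _ (by omega) (h.erase hT hnc hab hm hiT)
  head_short d hd := by
    rw [List.head?_cons, Option.mem_some_iff] at hd
    exact hd ▸ isShortChord_ear hm
  getLast_short := getLast_short_cons hT hnc htf hcard hab hm hL hhead
  boundary_mem_triangle :=
    boundary_mem_triangle_of_erase hT hnc hab hm hL.boundary_mem_triangle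

lemma mem_head?_or_mem_getLast?_of_shareTriangle_ear (hT : ∀ d ∈ T, IsChord V d)
    (hnc : Noncrossing T) (htf : TriangleFree T) (hab : (a, b) ∈ T)
    (hm : V.filter (fun v => a < v ∧ v < b) = {m})
    (hL : IsChordPath (V.erase m) (T.erase (a, b)) L) {e : ℕ × ℕ} (he : e ∈ T.erase (a, b))
    (hs : ShareTriangle V T (a, b) e) : e ∈ L.head? ∨ e ∈ L.getLast? := by
  refine mem_head?_or_mem_getLast? hL.nodup hL.isChain ((hL.mem_iff e).2 he)
    fun y z hy hz hyz hye hze hy' hz' => ?_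
  have hyT := (hL.mem_iff y).1 hy
  have hzT := (hL.mem_iff z).1 hz
  exact not_three_shareTriangle hT hnc htf (Finset.mem_of_mem_erase he)
    (Finset.mem_of_mem_erase hyT) (Finset.mem_of_mem_erase hzT) hab hyz
    (Finset.ne_of_mem_erase hyT) (Finset.ne_of_mem_erase hzT) hye hze
    (Finset.ne_of_mem_erase he).symm (hy'.of_erase hT hab hm).symm (hz'.of_erase hT hab hm)
    hs.symm

theorem exists_isChordPath (n : ℕ) :
    ∀ (V : Finset ℕ) (T : Finset (ℕ × ℕ)), V.card = n + 3 → T.card = n →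
      (∀ d ∈ T, IsChord V d) → Noncrossing T → TriangleFree T → ∃ L, IsChordPath V T L := by
  induction n with
  | zero =>
    intro V T hV hcard _ _ _
    rw [Finset.card_eq_zero.1 hcard]
    exact ⟨[], isChordPath_nil hV⟩
  | succ n ih =>
    intro V T hV hcard hT hnc htf
    obtain ⟨a, b, m, hab, hm⟩ := exists_ear (by omega) (by omega) hT hnc
    have hV' : (V.erase m).card = n + 3 := by
      rw [Finset.card_erase_of_mem (ear_apex_mem hm).1]
      omega
    have hcard' : (T.erase (a, b)).card = n := by
      rw [Finset.card_erase_of_mem hab]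
      omega
    obtain ⟨L, hL⟩ := ih (V.erase m) (T.erase (a, b)) hV' hcard'
      (fun e he => isChord_erase hT hnc hab hm he) (hnc.mono (Finset.erase_subset _ _))
      (triangleFree_of_subset htf (Finset.erase_subset _ _))
    suffices ∃ L', IsChordPath (V.erase m) (T.erase (a, b)) L' ∧
        ∀ e ∈ L'.head?, ShareTriangle V T (a, b) e by
      obtain ⟨L', hL', hhead⟩ := this
      exact ⟨_, hL'.cons hT hnc htf (by omega) hab hm hhead⟩
    rcases Nat.eq_zero_or_pos n with rfl | hn
    · have : L = [] := List.eq_nil_of_length_eq_zero (by rw [hL.length_eq_card, hcard'])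
      exact ⟨L, hL, by simp [this]⟩
    obtain ⟨t, ht, hab_t⟩ :=
      hL.boundary_mem_triangle a b (Or.inl (isSuccEdge_erase_ear hT hab hm))
    obtain ⟨e, he, he_t⟩ := exists_mem_triSide (by omega) ht
    have hs : ShareTriangle V T (a, b) e := ⟨t, ht.of_erase hT hab hm, hab_t, he_t⟩
    rcases mem_head?_or_mem_getLast?_of_shareTriangle_ear hT hnc htf hab hm hL he hs with h | h
    · exact ⟨L, hL, fun e' he' => Option.mem_unique h he' ▸ hs⟩
    · refine ⟨L.reverse, hL.reverse, fun e' he' => ?_⟩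
      rw [List.head?_reverse] at he'
      exact Option.mem_unique h he' ▸ hs

end Induction

section Range

variable {k : ℕ} {T : Finset (ℕ × ℕ)}

lemma isChord_range_of_isDiag {d : ℕ × ℕ} (h : IsDiag k d) : IsChord (Finset.range k) d := by
  obtain ⟨h₁₂, h₂, hsucc, hwrap⟩ := h
  refine ⟨Finset.mem_range.2 (by omega), Finset.mem_range.2 h₂, h₁₂,
    ⟨d.1 + 1, Finset.mem_range.2 (by omega), by omega, by omega⟩, ?_⟩
  by_cases h₁ : d.1 = 0
  · exact ⟨k - 1, Finset.mem_range.2 (by omega), by omega⟩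
  · exact ⟨0, Finset.mem_range.2 (by omega), by omega⟩

lemma isSuccEdge_range_iff {x y : ℕ} : IsSuccEdge (Finset.range k) x y ↔ y = x + 1 ∧ y < k := by
  simp only [IsSuccEdge, Finset.mem_range]
  constructor
  · rintro ⟨hx, hy, hxy, hsucc⟩
    exact ⟨by_contra fun h => hsucc (x + 1) (by omega) (by omega), hy⟩
  · rintro ⟨rfl, hy⟩
    exact ⟨by omega, hy, by omega, fun v _ => by omega⟩

lemma isWrapEdge_range_iff {x y : ℕ} :
    IsWrapEdge (Finset.range k) x y ↔ x = 0 ∧ y = k - 1 ∧ 0 < k - 1 := by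
  simp only [IsWrapEdge, Finset.mem_range]
  constructor
  · rintro ⟨hx, hy, hxy, hlo, hhi⟩
    exact ⟨by_contra fun h => hlo 0 (by omega) (by omega),
      by_contra fun h => hhi (k - 1) (by omega) (by omega), by omega⟩
  · rintro ⟨rfl, rfl, hk⟩
    exact ⟨by omega, by omega, by omega, fun v _ => by omega, fun v hv => by omega⟩

lemma isSide_range_iff {p : ℕ × ℕ} (hp : p.1 < p.2) (hpk : p.2 < k) :
    IsSide (Finset.range k) T p ↔ SideOk k T p := by
  unfold IsSide SideOk
  rw [isSuccEdge_range_iff, isWrapEdge_range_iff]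
  constructor
  · rintro (h | h | h)
    exacts [Or.inl h, Or.inr (Or.inl h.1), Or.inr (Or.inr ⟨h.1, h.2.1⟩)]
  · rintro (h | h | h)
    exacts [Or.inl h, Or.inr (Or.inl ⟨h, hpk⟩), Or.inr (Or.inr ⟨h.1, h.2, by omega⟩)]

lemma isTriangle_range_iff (hT : ∀ d ∈ T, IsDiag k d) (t : ℕ × ℕ × ℕ) :
    IsTriangle (Finset.range k) T t ↔ IsTri k T t := by
  constructor
  · rintro ⟨h₁₂, h₂₃, s₁₂, s₂₃, s₁₃⟩
    have h₃ : t.2.2 < k := by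
      rcases s₂₃ with h | h | h
      exacts [(hT _ h).2.1, Finset.mem_range.1 h.2.1, Finset.mem_range.1 h.2.1]
    exact ⟨h₁₂, h₂₃, h₃, (isSide_range_iff h₁₂ (by omega)).1 s₁₂,
      (isSide_range_iff h₂₃ h₃).1 s₂₃,
      (isSide_range_iff (p := (t.1, t.2.2)) (h₁₂.trans h₂₃) h₃).1 s₁₃⟩
  · rintro ⟨h₁₂, h₂₃, h₃, s₁₂, s₂₃, s₁₃⟩
    exact ⟨h₁₂, h₂₃, (isSide_range_iff h₁₂ (by omega)).2 s₁₂,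
      (isSide_range_iff h₂₃ h₃).2 s₂₃,
      (isSide_range_iff (p := (t.1, t.2.2)) (h₁₂.trans h₂₃) h₃).2 s₁₃⟩

lemma shareTriangle_range_iff (hT : ∀ d ∈ T, IsDiag k d) {d e : ℕ × ℕ} :
    ShareTriangle (Finset.range k) T d e ↔ ∃ t, IsTri k T t ∧ TriSide t d ∧ TriSide t e := by
  simp only [ShareTriangle, isTriangle_range_iff hT]

lemma isShort_of_isShortChord_range {d : ℕ × ℕ} (hd : IsDiag k d)
    (h : IsShortChord (Finset.range k) d) : IsShort k d := by
  obtain ⟨h₁₂, h₂, -, -⟩ := hd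
  rcases h with h | h
  · have hinner : (Finset.range k).filter (fun v => d.1 < v ∧ v < d.2) = Finset.Ioo d.1 d.2 := by
      ext v
      simp only [Finset.mem_filter, Finset.mem_range, Finset.mem_Ioo]
      omega
    rw [hinner, Nat.card_Ioo] at h
    exact Or.inl (by omega)
  · have houter : (Finset.range k).filter (fun v => v < d.1 ∨ d.2 < v) =
        Finset.range d.1 ∪ Finset.Ioo d.2 k := by
      ext v
      simp only [Finset.mem_filter, Finset.mem_range, Finset.mem_union, Finset.mem_Ioo]
      omega
    have hdisj : Disjoint (Finset.range d.1) (Finset.Ioo d.2 k) :=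
      Finset.disjoint_left.2 fun v hv hv' => by
        rw [Finset.mem_range] at hv
        rw [Finset.mem_Ioo] at hv'
        omega
    rw [houter, Finset.card_union_of_disjoint hdisj, Finset.card_range, Nat.card_Ioo] at h
    exact Or.inr (by omega)

end Range

section PathLabelling

variable {n : ℕ} {β : Type*}

lemma perm_step_up_of_step_up {τ : Equiv.Perm (Fin n)}
    (hτ : ∀ i j : Fin n, (j : ℕ) = i + 1 → (τ j : ℕ) = τ i + 1 ∨ (τ i : ℕ) = τ j + 1)
    {i j l : Fin n} (hj : (j : ℕ) = i + 1) (hl : (l : ℕ) = j + 1)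
    (hup : (τ j : ℕ) = τ i + 1) : (τ l : ℕ) = τ j + 1 := by
  refine (hτ j l hl).resolve_right fun hdown => ?_
  have : l = i := τ.injective (Fin.ext (by omega))
  have := congrArg Fin.val this
  omega

lemma perm_eq_refl_of_step_up {τ : Equiv.Perm (Fin n)}
    (hτ : ∀ i j : Fin n, (j : ℕ) = i + 1 → (τ j : ℕ) = τ i + 1 ∨ (τ i : ℕ) = τ j + 1)
    (hup : ∀ i j : Fin n, (i : ℕ) = 0 → (j : ℕ) = 1 → (τ j : ℕ) = τ i + 1) :
    τ = Equiv.refl _ := by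
  rcases Nat.lt_or_ge n 2 with hn | hn
  · have : Subsingleton (Fin n) := Fin.subsingleton_iff_le_one.2 (by omega)
    exact Subsingleton.elim _ _
  set i₀ : Fin n := ⟨0, by omega⟩
  have hsucc : ∀ m (i j : Fin n), (i : ℕ) = m → (j : ℕ) = m + 1 → (τ j : ℕ) = τ i + 1 := by
    intro m
    induction m with
    | zero => exact hup
    | succ m ih =>
      intro i j hi hj
      exact perm_step_up_of_step_up hτ (i := ⟨m, by omega⟩) hi (by omega) (ih _ _ rfl hi)
  have hval : ∀ m (hm : m < n), (τ ⟨m, hm⟩ : ℕ) = τ i₀ + m := by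
    intro m
    induction m with
    | zero => intro; rfl
    | succ m ih =>
      intro hm
      rw [hsucc m ⟨m, by omega⟩ _ rfl rfl, ih (by omega)]
      rfl
  have hlast := hval (n - 1) (by omega)
  have := (τ ⟨n - 1, by omega⟩).isLt
  ext i
  rw [show i = ⟨i, i.isLt⟩ from rfl, hval i i.isLt]
  simp only [Equiv.refl_apply]
  omega

theorem perm_eq_refl_or_eq_revPerm {τ : Equiv.Perm (Fin n)}
    (hτ : ∀ i j : Fin n, (j : ℕ) = i + 1 → (τ j : ℕ) = τ i + 1 ∨ (τ i : ℕ) = τ j + 1) :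
    τ = Equiv.refl _ ∨ τ = Fin.revPerm := by
  by_cases hup : ∀ i j : Fin n, (i : ℕ) = 0 → (j : ℕ) = 1 → (τ j : ℕ) = τ i + 1
  · exact Or.inl (perm_eq_refl_of_step_up hτ hup)
  right
  have hrev : τ.trans Fin.revPerm = Equiv.refl _ := by
    refine perm_eq_refl_of_step_up (fun i j hij => ?_) (fun i j hi hj => ?_)
    · have := hτ i j hij
      have := (τ i).isLt
      have := (τ j).isLt
      simp only [Equiv.trans_apply, Fin.revPerm_apply, Fin.val_rev]
      omega
    · push Not at hup
      obtain ⟨i', j', hi', hj', hne⟩ := hup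
      obtain rfl : i' = i := Fin.ext (by omega)
      obtain rfl : j' = j := Fin.ext (by omega)
      have hdown := (hτ i' j' (by omega)).resolve_left hne
      have := (τ i').isLt
      simp only [Equiv.trans_apply, Fin.revPerm_apply, Fin.val_rev]
      omega
  ext i
  have hi := congrArg (fun σ : Equiv.Perm (Fin n) => (σ i : ℕ)) hrev
  have := (τ i).isLt
  simp only [Equiv.trans_apply, Fin.revPerm_apply, Fin.val_rev, Equiv.refl_apply] at hi ⊢
  omega

def IsPathLabelling (R : β → β → Prop) (c : β ≃ Fin n) : Prop :=
  ∀ x y, x ≠ y → R x y → (c x : ℕ) = c y + 1 ∨ (c y : ℕ) = c x + 1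

variable {R : β → β → Prop} {e : Fin n ≃ β}

lemma isPathLabelling_symm
    (hR : ∀ i j, i ≠ j → (R (e i) (e j) ↔ (j : ℕ) = i + 1 ∨ (i : ℕ) = j + 1)) :
    IsPathLabelling R e.symm := by
  intro x y hxy hR'
  have := (hR (e.symm x) (e.symm y) (by simpa using hxy)).1 (by simpa using hR')
  omega

lemma isPathLabelling_symm_trans_revPerm
    (hR : ∀ i j, i ≠ j → (R (e i) (e j) ↔ (j : ℕ) = i + 1 ∨ (i : ℕ) = j + 1)) :
    IsPathLabelling R (e.symm.trans Fin.revPerm) := by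
  intro x y hxy hR'
  have := isPathLabelling_symm hR x y hxy hR'
  have := (e.symm x).isLt
  have := (e.symm y).isLt
  simp only [Equiv.trans_apply, Fin.revPerm_apply, Fin.val_rev]
  omega

lemma IsPathLabelling.eq_symm_or_eq_symm_trans_revPerm
    (hR : ∀ i j, i ≠ j → (R (e i) (e j) ↔ (j : ℕ) = i + 1 ∨ (i : ℕ) = j + 1))
    {c : β ≃ Fin n} (hc : IsPathLabelling R c) : c = e.symm ∨ c = e.symm.trans Fin.revPerm := by
  have hτ : ∀ i j : Fin n, (j : ℕ) = i + 1 →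
      ((e.trans c) j : ℕ) = (e.trans c) i + 1 ∨ ((e.trans c) i : ℕ) = (e.trans c) j + 1 := by
    intro i j hij
    have hne : i ≠ j := fun h => by subst h; omega
    exact (hc _ _ (e.injective.ne hne) ((hR i j hne).2 (Or.inl hij))).symm
  rcases perm_eq_refl_or_eq_revPerm hτ with h | h
  · left
    ext x
    simpa using congrArg (fun σ : Equiv.Perm (Fin n) => (σ (e.symm x) : ℕ)) h
  · right
    ext x
    simpa using congrArg (fun σ : Equiv.Perm (Fin n) => (σ (e.symm x) : ℕ)) h

end PathLabelling

def OnCommonTriangle (k : ℕ) (T : Finset (ℕ × ℕ)) (d e : {d // d ∈ T}) : Prop :=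
  ∃ t, IsTri k T t ∧ TriSide t d.1 ∧ TriSide t e.1

lemma properColoring_iff {k : ℕ} {T : Finset (ℕ × ℕ)} {f : {d // d ∈ T} ≃ Fin (k - 3)} :
    ProperColoring k T f ↔
      (∀ d, (f d : ℕ) = 0 → IsShort k d.1) ∧ IsPathLabelling (OnCommonTriangle k T) f :=
  Iff.rfl

theorem exists_chord_enumeration {k : ℕ} (hk : 3 ≤ k) {T : Finset (ℕ × ℕ)}
    (hT : IsTriangulation k T) (hTF : TriangleFree T) :
    ∃ e : Fin (k - 3) ≃ {d // d ∈ T},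
      (∀ i j, i ≠ j → (OnCommonTriangle k T (e i) (e j) ↔ (j : ℕ) = i + 1 ∨ (i : ℕ) = j + 1)) ∧
      (∀ i : Fin (k - 3), (i : ℕ) = 0 → IsShort k (e i).1) ∧
      (∀ i : Fin (k - 3), (i : ℕ) = k - 4 → IsShort k (e i).1) := by
  obtain ⟨hcard, hdiag, hnc⟩ := hT
  obtain ⟨L, hL⟩ := exists_isChordPath (k - 3) (Finset.range k) T
    (by rw [Finset.card_range]; omega) hcard (fun d hd => isChord_range_of_isDiag (hdiag d hd))
    hnc hTF
  have hlen : L.length = k - 3 := hL.length_eq_card.trans hcard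
  let e : Fin (k - 3) ≃ {d // d ∈ T} := (finCongr hlen.symm).trans
    ((hL.nodup.getEquiv L).trans (Equiv.subtypeEquivRight hL.mem_iff))
  have he : ∀ i, (e i).1 = L[(i : ℕ)]'(by omega) := fun i => rfl
  refine ⟨e, fun i j hij => ?_, fun i hi => ?_, fun i hi => ?_⟩
  · rw [OnCommonTriangle, he, he, ← shareTriangle_range_iff hdiag]
    exact hL.shareTriangle_getElem_iff _ _ (Fin.val_ne_of_ne hij)
  · refine isShort_of_isShortChord_range (hdiag _ (e i).2) (hL.head_short _ ?_)
    rw [he, List.head?_eq_getElem?]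
    simp only [hi]
    exact List.getElem?_eq_getElem _
  · refine isShort_of_isShortChord_range (hdiag _ (e i).2) (hL.getLast_short _ ?_)
    rw [he, List.getLast?_eq_getElem?]
    simp only [hi, hlen, show k - 3 - 1 = k - 4 by omega]
    exact List.getElem?_eq_getElem _

end PolygonTriangulation

open PolygonTriangulation in
theorem stmt12 (k : ℕ) (hk : 5 ≤ k) (T : Finset (ℕ × ℕ)) (hT : IsTriangulation k T)
    (hTF : TriangleFree T) :
    ∃ f g : {d // d ∈ T} ≃ Fin (k - 3), f ≠ g ∧ ProperColoring k T f ∧ ProperColoring k T g ∧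
      ∀ h : {d // d ∈ T} ≃ Fin (k - 3), ProperColoring k T h → h = f ∨ h = g := by
  obtain ⟨e, hadj, hfirst, hlast⟩ := exists_chord_enumeration (by omega) hT hTF
  simp only [properColoring_iff]
  refine ⟨e.symm, e.symm.trans Fin.revPerm, fun h => ?_,
    ⟨fun d hd => ?_, isPathLabelling_symm hadj⟩,
    ⟨fun d hd => ?_, isPathLabelling_symm_trans_revPerm hadj⟩,
    fun h hh => hh.2.eq_symm_or_eq_symm_trans_revPerm hadj⟩
  · have := congrArg (fun c => (c (e ⟨0, by omega⟩) : ℕ)) h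
    simp only [Equiv.symm_apply_apply, Equiv.trans_apply, Fin.revPerm_apply, Fin.val_rev] at this
    omega
  · simpa using hfirst (e.symm d) hd
  · simp only [Equiv.trans_apply, Fin.revPerm_apply, Fin.val_rev] at hd
    have := (e.symm d).isLt
    simpa using hlast (e.symm d) (by omega)
end
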